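/- arXiv:2409.06658 — 5 statements merged into one kernel-verified Lean document; each statement's English description precedes it below -/
import Mathlib

section
/- Let r ≥ 1 and n ≥ 0 be integers, let P ∈ ℂ[z₁,…,z_r] be a symmetric polynomial of degree at most n+1 in each variable, and let Q₀,…,Q_n ∈ ℂ[z₁,…,z_r] be symmetric polynomials of degree exactly 1 in each variable. Let x = (x₁,…,x_r) and y = (y₁,…,y_r) be points of ℂ^r such that Q_k(x) ≠ Q_k(y) for every k, and for each k ∈ {0,…,n} let t_k ∈ ℂ^r be a vector satisfying e_m(t_k) = (Q_k(y)·e_m(x) − Q_k(x)·e_m(y)) / (Q_k(y) − Q_k(x)) for all m ∈ {1,…,r}, where e_m denotes the m-th elementary symmetric polynomial. Assume moreover that Q_j(x) ≠ 0 and Q_j(y) ≠ 0 for all j, and that Q_j(t_k) ≠ 0 for all j ≠ k. Then P(x)/∏_{j=0}^{n} Q_j(x) − P(y)/∏_{j=0}^{n} Q_j(y) = ∑_{k=0}^{n} [ P(t_k)/∏_{j=0, j≠k}^{n} Q_j(t_k) ] · ( 1/Q_k(x) − 1/Q_k(y) ). -/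
/-!
Write `P = F(e₁, …, e_r)` and `Q_k = G_k(e₁, …, e_r)` by the fundamental theorem of symmetric
polynomials; the degree bounds in each variable become total degree bounds `deg F ≤ n + 1` and
`deg G_k ≤ 1`. Restrict everything to the line `z ↦ e(y) + z (e(x) − e(y))` in the coordinates `e`:
`P` becomes a polynomial `p` of degree `≤ n + 1` and each `Q_k` an affine function `q_k` with
`q_k(1) = Q_k(x)`, `q_k(0) = Q_k(y)`, whose root `s_k = Q_k(y) / (Q_k(y) − Q_k(x))` is exactly the
parameter at which the line passes through `e(t_k)`. The identity is then the one-variable partial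
fraction expansion `p / ∏ q_j = c + ∑ p(s_k) / (∏_{j ≠ k} q_j(s_k) q_k)` evaluated at `1` and `0`.
-/

open Finset AddMonoidAlgebra

namespace Polynomial

theorem eval_eq_of_natDegree_le_one {R : Type*} [CommRing R] {q : R[X]} (hq : q.natDegree ≤ 1)
    (z : R) : q.eval z = q.eval 0 + (q.eval 1 - q.eval 0) * z := by
  rw [eq_X_add_C_of_natDegree_le_one hq]
  simp only [eval_add, eval_mul, eval_C, eval_X]
  ring

theorem natDegree_eq_one_of_eval_one_ne_eval_zero {R : Type*} [CommRing R] {q : R[X]}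
    (hq : q.natDegree ≤ 1) (h : q.eval 1 ≠ q.eval 0) : q.natDegree = 1 := by
  refine le_antisymm hq (Nat.one_le_iff_ne_zero.mpr fun h0 => h ?_)
  rw [eq_C_of_natDegree_eq_zero h0, eval_C, eval_C]

theorem isRoot_eval_zero_div_of_natDegree_le_one {K : Type*} [Field K] {q : K[X]}
    (hq : q.natDegree ≤ 1) (h : q.eval 1 ≠ q.eval 0) : q.IsRoot (q.eval 0 / (q.eval 0 - q.eval 1)) := by
  have : q.eval 0 - q.eval 1 ≠ 0 := sub_ne_zero.mpr h.symm
  rw [IsRoot, eval_eq_of_natDegree_le_one hq]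
  field_simp
  ring

theorem eval_C_sub_mul_X_add_C_div_sub {K : Type*} [Field K] {a b l m : K} (h : m ≠ l) :
    (C (a - b) * X + C b).eval (m / (m - l)) = (m * a - l * b) / (m - l) := by
  have : m - l ≠ 0 := sub_ne_zero.mpr h
  simp only [eval_add, eval_mul, eval_C, eval_X]
  field_simp
  ring

variable {K ι : Type*} [Field K] [Fintype ι] [DecidableEq ι]

theorem exists_eq_C_mul_prod_add_sum_mul_prod_erase (p : K[X]) {q : ι → K[X]} {s : ι → K}
    (hq : ∀ j, (q j).natDegree = 1) (hs : ∀ k, (q k).IsRoot (s k))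
    (hqs : ∀ j k, j ≠ k → (q j).eval (s k) ≠ 0) (hp : p.natDegree ≤ Fintype.card ι) :
    ∃ c, p = C c * ∏ j, q j + ∑ k, C (p.eval (s k) / ∏ j ∈ univ.erase k, (q j).eval (s k)) *
      ∏ j ∈ univ.erase k, q j := by
  set g := p - ∑ k, C (p.eval (s k) / ∏ j ∈ univ.erase k, (q j).eval (s k)) *
      ∏ j ∈ univ.erase k, q j with hg
  have hq0 : ∀ j, q j ≠ 0 := fun j h => by simpa [h] using hq j
  have hprod : (∏ j, q j).natDegree = Fintype.card ι := by
    simp [natDegree_prod _ _ fun j _ => hq0 j, hq]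
  have hprod0 : ∏ j, q j ≠ 0 := prod_ne_zero_iff.mpr fun j _ => hq0 j
  have hg_deg : g.natDegree ≤ Fintype.card ι := by
    refine (natDegree_sub_le _ _).trans <| max_le hp <| natDegree_sum_le_of_forall_le _ _ fun k _ =>
      (natDegree_C_mul_le _ _).trans ?_
    rw [natDegree_prod _ _ fun j _ => hq0 j]
    simp [hq]
  have hg_root : ∀ k, g.eval (s k) = 0 := by
    intro k
    have hne : ∏ j ∈ univ.erase k, (q j).eval (s k) ≠ 0 :=
      prod_ne_zero_iff.mpr fun j hj => hqs j k (ne_of_mem_erase hj)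
    rw [hg, eval_sub, eval_finsetSum, sum_eq_single k]
    · simp only [eval_mul, eval_C, eval_prod]
      rw [div_mul_cancel₀ _ hne, sub_self]
    · intro j _ hjk
      rw [eval_mul, eval_prod]
      exact mul_eq_zero_of_right _ (prod_eq_zero (mem_erase.mpr ⟨Ne.symm hjk, mem_univ k⟩) (hs k))
    · simp
  have hs_inj : Function.Injective s := fun j k hjk => by
    by_contra hne
    exact hqs j k hne (hjk ▸ hs j)
  have hmod : g % ∏ j, q j = 0 := by
    refine eq_zero_of_degree_lt_of_eval_index_eq_zero univ hs_inj.injOn ?_ fun k _ => ?_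
    · rw [card_univ, ← hprod, ← degree_eq_natDegree hprod0]
      exact degree_mod_lt g hprod0
    · rw [EuclideanDomain.mod_eq_sub_mul_div, eval_sub, eval_mul, hg_root, eval_prod,
        prod_eq_zero (mem_univ k) (hs k).eq_zero, zero_mul, sub_zero]
  obtain ⟨u, hu⟩ := EuclideanDomain.mod_eq_zero.mp hmod
  have hu0 : u.natDegree = 0 := by
    rcases eq_or_ne u 0 with rfl | hu0
    · rfl
    have := natDegree_mul hprod0 hu0
    rw [← hu] at this
    omega
  refine ⟨u.coeff 0, ?_⟩
  rw [← eq_C_of_natDegree_eq_zero hu0, mul_comm, ← hu, hg, sub_add_cancel]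

theorem eval_div_prod_sub_eval_div_prod (p : K[X]) {q : ι → K[X]} {s : ι → K}
    (hq : ∀ j, (q j).natDegree = 1) (hs : ∀ k, (q k).IsRoot (s k))
    (hqs : ∀ j k, j ≠ k → (q j).eval (s k) ≠ 0) (hp : p.natDegree ≤ Fintype.card ι) {z w : K}
    (hz : ∀ j, (q j).eval z ≠ 0) (hw : ∀ j, (q j).eval w ≠ 0) :
    p.eval z / ∏ j, (q j).eval z - p.eval w / ∏ j, (q j).eval w
      = ∑ k, (p.eval (s k) / ∏ j ∈ univ.erase k, (q j).eval (s k))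
          * (1 / (q k).eval z - 1 / (q k).eval w) := by
  obtain ⟨c, hc⟩ := exists_eq_C_mul_prod_add_sum_mul_prod_erase p hq hs hqs hp
  have expand : ∀ z, (∀ j, (q j).eval z ≠ 0) → p.eval z / ∏ j, (q j).eval z
      = c + ∑ k, (p.eval (s k) / ∏ j ∈ univ.erase k, (q j).eval (s k)) * (1 / (q k).eval z) := by
    intro z hz
    have hprod : ∀ t : Finset ι, ∏ j ∈ t, (q j).eval z ≠ 0 :=
      fun _ => prod_ne_zero_iff.mpr fun j _ => hz j
    conv_lhs => rw [hc]
    simp only [eval_add, eval_mul, eval_C, eval_prod, eval_finsetSum]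
    rw [add_div, mul_div_cancel_right₀ _ (hprod _), sum_div]
    congr 1
    refine sum_congr rfl fun k _ => ?_
    rw [← mul_prod_erase univ _ (mem_univ k), mul_comm ((q k).eval z), mul_div_assoc,
      div_mul_cancel_left₀ (hprod _), one_div]
  rw [expand z hz, expand w hw, add_sub_add_left_eq_sub, ← sum_sub_distrib]
  simp only [mul_sub]

end Polynomial

theorem Finsupp.apply_le_of_toLex_le {α N : Type*} [LinearOrder α] [LinearOrder N] [Zero N]
    {a b : α →₀ N} {i : α} (hab : toLex a ≤ toLex b) (h : ∀ j < i, a j = b j) : a i ≤ b i := by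
  refine Pi.apply_le_of_toLex ?_ h
  rcases hab.lt_or_eq with hlt | heq
  · exact le_of_lt (Finsupp.Lex.lt_iff.mp hlt)
  · rw [toLex_inj.mp heq]

theorem Fin.accumulate_apply_zero (n m : ℕ) (t : Fin n → ℕ) :
    Fin.accumulate n (m + 1) t 0 = ∑ i, t i := by
  simp [Fin.accumulate_apply]

namespace MvPolynomial

section FundamentalTheorem

variable {R : Type*} [CommRing R] {n d : ℕ}

/- The argument of `esymmAlgHom_fin_bijective`, tracking degrees: the lex-leading exponent of
`esymmAlgHomMonomial t c` is `accumulate t`, whose first coordinate is the degree `∑ tᵢ` of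
`monomial t c`, and this first coordinate can only decrease as leading terms are removed. -/
theorem IsSymmetric.exists_aeval_esymm_of_supDegree_le {p : MvPolynomial (Fin (n + 1)) R}
    (hp : p.IsSymmetric) (hd : ofLex (p.supDegree toLex) 0 ≤ d) :
    ∃ F : MvPolynomial (Fin (n + 1)) R, F.totalDegree ≤ d ∧
      aeval (fun i : Fin (n + 1) => esymm (Fin (n + 1)) R (i + 1)) F = p := by
  induction he : p.supDegree toLex using WellFoundedLT.induction generalizing p with | _ u ih
  subst he
  obtain rfl | h0 := eq_or_ne p 0
  · exact ⟨0, by simp, by simp⟩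
  set t := Finsupp.equivFunOnFinite.symm
    (Fin.invAccumulate (n + 1) (n + 1) <| ↑(ofLex <| p.supDegree toLex))
  set M := monomial t (p.leadingCoeff toLex)
  have hM : aeval (fun i : Fin (n + 1) => esymm (Fin (n + 1)) R (i + 1)) M
      = esymmAlgHomMonomial (Fin (n + 1)) t (p.leadingCoeff toLex) := by
    rw [esymmAlgHomMonomial, esymmAlgHom_apply]
  have hacc : Fin.accumulate (n + 1) (n + 1) t = ofLex (p.supDegree toLex) :=
    Fin.accumulate_invAccumulate le_rfl hp.antitone_supDegree
  have hsupDegree :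
      ofLex ((esymmAlgHomMonomial (Fin (n + 1)) t <| p.leadingCoeff toLex).supDegree toLex)
        = ofLex (p.supDegree toLex) := by
    rw [DFunLike.ext'_iff, supDegree_esymmAlgHomMonomial _ _ le_rfl, hacc]
    rwa [Ne, leadingCoeff_eq_zero toLex.injective]
  have hMdeg : M.totalDegree ≤ d := by
    calc M.totalDegree ≤ t.sum fun _ e => e := totalDegree_monomial_le _ _
      _ = Fin.accumulate (n + 1) (n + 1) t 0 := by
        rw [Fin.accumulate_apply_zero, Finsupp.sum_fintype _ _ fun _ => rfl]
      _ ≤ d := by rwa [hacc]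
  obtain he | hne := eq_or_ne p (esymmAlgHomMonomial (Fin (n + 1)) t <| p.leadingCoeff toLex)
  · exact ⟨M, hMdeg, by rw [hM, ← he]⟩
  have hlt := (supDegree_sub_lt_of_leadingCoeff_eq toLex.injective (ofLex_inj.mp hsupDegree).symm
    (leadingCoeff_esymmAlgHomMonomial t le_rfl).symm).resolve_right hne
  have hd' := (Finsupp.apply_le_of_toLex_le hlt.le fun j hj => absurd hj (Fin.not_lt_zero j)).trans hd
  obtain ⟨F, hF, hFp⟩ := ih _ hlt (hp.sub (isSymmetric_esymmAlgHomMonomial _ _)) hd' rfl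
  refine ⟨F + M, (totalDegree_add _ _).trans (max_le hF hMdeg), ?_⟩
  rw [map_add, hFp, hM, sub_add_cancel]

theorem IsSymmetric.exists_aeval_esymm_of_degreeOf_le {p : MvPolynomial (Fin n) R}
    (hp : p.IsSymmetric) (hd : ∀ i, p.degreeOf i ≤ d) :
    ∃ F : MvPolynomial (Fin n) R, F.totalDegree ≤ d ∧
      aeval (fun i : Fin n => esymm (Fin n) R (i + 1)) F = p := by
  cases n with
  | zero =>
    refine ⟨p, ?_, ?_⟩
    · rw [(totalDegree_eq_zero_iff _ p).mpr fun _ _ i => i.elim0]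
      exact Nat.zero_le d
    · rw [show (fun i : Fin 0 => esymm (Fin 0) R (i + 1)) = X from
        _root_.funext fun i => i.elim0, aeval_X_left_apply]
  | succ n =>
    refine hp.exists_aeval_esymm_of_supDegree_le ?_
    obtain rfl | h0 := eq_or_ne p 0
    · exact Nat.zero_le d
    obtain ⟨m, hm, hpm⟩ := exists_supDegree_mem_support toLex h0
    rw [hpm, ofLex_toLex]
    exact degreeOf_le_iff.mp (hd 0) m hm

end FundamentalTheorem

open Polynomial in
theorem natDegree_aeval_le_totalDegree {σ R : Type*} [CommSemiring R]
    {L : σ → R[X]} (hL : ∀ i, (L i).natDegree ≤ 1) (F : MvPolynomial σ R) :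
    (aeval L F).natDegree ≤ F.totalDegree := by
  conv_lhs => rw [F.as_sum, map_sum]
  refine natDegree_sum_le_of_forall_le _ _ fun m hm => ?_
  rw [aeval_monomial, Polynomial.algebraMap_eq]
  refine (natDegree_C_mul_le _ _).trans ((natDegree_prod_le _ _).trans ?_)
  refine le_trans (Finset.sum_le_sum fun i _ => ?_) (le_totalDegree hm)
  simpa using natDegree_pow_le_of_le (m i) (hL i)

open Polynomial in
theorem eval_aeval_eq_eval_aeval {σ τ R : Type*} [CommSemiring R]
    {L : σ → R[X]} {e : σ → MvPolynomial τ R} {z : R} {v : τ → R}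
    (h : ∀ i, (L i).eval z = eval v (e i)) (G : MvPolynomial σ R) :
    (aeval L G).eval z = eval v (aeval e G) := by
  calc (aeval L G).eval z
      = Polynomial.aeval z (aeval L G) := by rw [Polynomial.coe_aeval_eq_eval]
    _ = aeval (fun i => eval v (e i)) G := by
      simp only [comp_aeval_apply, Polynomial.coe_aeval_eq_eval, h]
    _ = aeval v (aeval e G) := (comp_aeval_apply e (aeval v) G).symm

end MvPolynomial

open MvPolynomial Finset

theorem symmetric_partial_fraction_general
    (r n : ℕ)
    (P : MvPolynomial (Fin r) ℂ) (hPsym : P.IsSymmetric)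
    (hPdeg : ∀ i : Fin r, P.degreeOf i ≤ n + 1)
    (Q : Fin (n + 1) → MvPolynomial (Fin r) ℂ)
    (hQsym : ∀ k, (Q k).IsSymmetric)
    (hQdeg : ∀ k (i : Fin r), (Q k).degreeOf i = 1)
    (x y : Fin r → ℂ)
    (hxy : ∀ k, eval x (Q k) ≠ eval y (Q k))
    (t : Fin (n + 1) → Fin r → ℂ)
    (ht : ∀ k, ∀ m ∈ Finset.Icc 1 r,
      eval (t k) (esymm (Fin r) ℂ m) =
        (eval y (Q k) * eval x (esymm (Fin r) ℂ m)
          - eval x (Q k) * eval y (esymm (Fin r) ℂ m))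
          / (eval y (Q k) - eval x (Q k)))
    (hQx : ∀ j, eval x (Q j) ≠ 0) (hQy : ∀ j, eval y (Q j) ≠ 0)
    (hQt : ∀ j k, j ≠ k → eval (t k) (Q j) ≠ 0) :
    eval x P / ∏ j, eval x (Q j) - eval y P / ∏ j, eval y (Q j)
      = ∑ k, (eval (t k) P / ∏ j ∈ Finset.univ.erase k, eval (t k) (Q j))
          * (1 / eval x (Q k) - 1 / eval y (Q k)) := by
  set e : Fin r → MvPolynomial (Fin r) ℂ := fun i => esymm (Fin r) ℂ (i + 1)
  obtain ⟨F, hF, hFP⟩ := hPsym.exists_aeval_esymm_of_degreeOf_le hPdeg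
  choose G hG hGQ using fun k => (hQsym k).exists_aeval_esymm_of_degreeOf_le fun i => (hQdeg k i).le
  set L : Fin r → Polynomial ℂ := fun i =>
    Polynomial.C (eval x (e i) - eval y (e i)) * Polynomial.X + Polynomial.C (eval y (e i))
  have hL : ∀ i, (L i).natDegree ≤ 1 := fun i => Polynomial.natDegree_linear_le
  have hL1 : ∀ i, (L i).eval 1 = eval x (e i) := fun i => by simp [L]
  have hL0 : ∀ i, (L i).eval 0 = eval y (e i) := fun i => by simp [L]
  set s : Fin (n + 1) → ℂ := fun k => eval y (Q k) / (eval y (Q k) - eval x (Q k))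
  have hLs : ∀ k i, (L i).eval (s k) = eval (t k) (e i) := fun k i => by
    rw [ht k (i + 1) (mem_Icc.mpr ⟨Nat.le_add_left 1 i, i.isLt⟩)]
    exact Polynomial.eval_C_sub_mul_X_add_C_div_sub (hxy k).symm
  have hP {z v} (h : ∀ i, (L i).eval z = eval v (e i)) : (aeval L F).eval z = eval v P :=
    hFP ▸ eval_aeval_eq_eval_aeval h F
  have hQ (k) {z v} (h : ∀ i, (L i).eval z = eval v (e i)) :
      (aeval L (G k)).eval z = eval v (Q k) :=
    hGQ k ▸ eval_aeval_eq_eval_aeval h (G k)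
  have hq : ∀ k, (aeval L (G k)).natDegree ≤ 1 :=
    fun k => (natDegree_aeval_le_totalDegree hL _).trans (hG k)
  have hq_ne : ∀ k, (aeval L (G k)).eval 1 ≠ (aeval L (G k)).eval 0 := fun k => by
    rw [hQ k hL1, hQ k hL0]
    exact hxy k
  have key := Polynomial.eval_div_prod_sub_eval_div_prod (aeval L F) (s := s)
    (fun k => Polynomial.natDegree_eq_one_of_eval_one_ne_eval_zero (hq k) (hq_ne k))
    (fun k => by simpa only [hQ k hL1, hQ k hL0] using
      Polynomial.isRoot_eval_zero_div_of_natDegree_le_one (hq k) (hq_ne k))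
    (fun j k hjk => by simpa only [hQ j (hLs k)] using hQt j k hjk)
    ((natDegree_aeval_le_totalDegree hL F).trans (by simpa using hF))
    (z := 1) (w := 0) (fun j => by simpa only [hQ j hL1] using hQx j)
    (fun j => by simpa only [hQ j hL0] using hQy j)
  simpa only [hP hL1, hP hL0, hP (hLs _), hQ _ hL1, hQ _ hL0, hQ _ (hLs _)] using key

/-- Proposition 2.1: partial fraction expansion for symmetric rational functions. -/
theorem symmetric_partial_fraction
    (r n : ℕ) (hr : 1 ≤ r)
    (P : MvPolynomial (Fin r) ℂ) (hPsym : P.IsSymmetric)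
    (hPdeg : ∀ i : Fin r, P.degreeOf i ≤ n + 1)
    (Q : Fin (n + 1) → MvPolynomial (Fin r) ℂ)
    (hQsym : ∀ k, (Q k).IsSymmetric)
    (hQdeg : ∀ k (i : Fin r), (Q k).degreeOf i = 1)
    (x y : Fin r → ℂ)
    (hxy : ∀ k, eval x (Q k) ≠ eval y (Q k))
    (t : Fin (n + 1) → Fin r → ℂ)
    (ht : ∀ k, ∀ m ∈ Finset.Icc 1 r,
      eval (t k) (esymm (Fin r) ℂ m) =
        (eval y (Q k) * eval x (esymm (Fin r) ℂ m)
          - eval x (Q k) * eval y (esymm (Fin r) ℂ m))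
          / (eval y (Q k) - eval x (Q k)))
    (hQx : ∀ j, eval x (Q j) ≠ 0) (hQy : ∀ j, eval y (Q j) ≠ 0)
    (hQt : ∀ j k, j ≠ k → eval (t k) (Q j) ≠ 0) :
    eval x P / ∏ j, eval x (Q j) - eval y P / ∏ j, eval y (Q j)
      = ∑ k, (eval (t k) P / ∏ j ∈ Finset.univ.erase k, eval (t k) (Q j))
          * (1 / eval x (Q k) - 1 / eval y (Q k)) :=
  symmetric_partial_fraction_general r n P hPsym hPdeg Q hQsym hQdeg x y hxy t ht hQx hQy hQt
end

section
/- Let r ≥ 1, n ≥ 0 and 0 ≤ l ≤ r−1 be integers, let P ∈ ℂ[z₁,…,z_r] be a symmetric polynomial of degree at most n in each variable, let b₀,…,b_n be pairwise distinct complex numbers, let x = (x₁,…,x_r) ∈ ℂ^r with x_m ≠ b_j for all m, j, and let y₁,…,y_l ∈ ℂ with y_m ≠ b_j for all m, j. For each k ∈ {0,…,n} let b_k^{(1)},…,b_k^{(r−1)} ∈ ℂ be numbers such that the polynomial identity (b_k − u)·∏_{m=1}^{r−1}(b_k^{(m)} − u) = ∏_{j=1}^{r}(x_j − u) − [∏_{j=1}^{l}(y_j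 − u)/(y_j − b_k)]·∏_{j=1}^{r}(x_j − b_k) holds in the variable u, and assume b_k^{(m)} ≠ b_j for all j, m. Then P(x)/∏_{j=0}^{n}∏_{m=1}^{r}(x_m − b_j) = ∑_{k=0}^{n} [ P(b_k, b_k^{(1)},…,b_k^{(r−1)}) / ( ∏_{j=0, j≠k}^{n}(b_k − b_j) · ∏_{j=0}^{n}∏_{m=1}^{r−1}(b_k^{(m)} − b_j) ) ] · ( ∑_{j=1}^{r} 1/(x_j − b_k) − ∑_{j=1}^{l} 1/(y_j − b_k) ). -/
/-
Both sides are linear in `P`, and symmetric polynomials of degree at most `n` in each variable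
are spanned by the products `h(z₁)⋯h(z_r)` with `deg h ≤ n` (polarization, i.e. Ryser's formula).
For such a product write `h = c ∏ₐ (t - a)`, `F(u) = ∏ (xⱼ - u)`, `G(u) = ∏ (yⱼ - u)` and
`zₖ = F(bₖ)/G(bₖ)`. The hypothesis says that `F - zₖ G` has the roots `bₖ, bₖ⁽ᵐ⁾`, so
`N(z) = c^r ∏ₐ (F(a) - z G(a))` has degree at most `n`, `N(0) = h(x₁)⋯h(x_r)` and
`N(zₖ) = h(bₖ) ∏ₘ h(bₖ⁽ᵐ⁾)`. Lagrange interpolation of `N` at the nodes `zₖ`, evaluated at `0`,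
is an identity with the Lagrange weights `∏_{j ≠ k} zⱼ/(zⱼ - zₖ)`. Differentiating the hypothesis
at `u = bₖ` gives `∑ 1/(xⱼ - bₖ) - ∑ 1/(yⱼ - bₖ) = ∏ₘ (bₖ⁽ᵐ⁾ - bₖ) / F(bₖ)`, which turns these
weights into the stated ones.
-/

open MvPolynomial Finset

/-- The vector `(c, v₁, …, v_{r-1}) ∈ ℂ^r` formed from a scalar and a vector
of length `r - 1`. -/
noncomputable def vecCons' {r : ℕ} (c : ℂ) (v : Fin (r - 1) → ℂ) : Fin r → ℂ :=
  fun i => if h : (i : ℕ) = 0 then c else v ⟨(i : ℕ) - 1, by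
    have := i.isLt; omega⟩

open scoped Polynomial

theorem sum_perm_prod_eq_sum_powerset {R ι : Type*} [CommRing R] [Fintype ι] [DecidableEq ι]
    (v : ι → ι → R) :
    ∑ σ : Equiv.Perm ι, ∏ i, v i (σ i) = ∑ t ∈ univ.powerset, (-1) ^ #t * ∏ i, ∑ s ∈ tᶜ, v i s := by
  set avoiding : ι → Finset (ι → ι) := fun s => {φ | ∀ i, φ i ≠ s}
  have h_surj : (univ.inf fun s => (avoiding s)ᶜ) = univ.image (⇑· : Equiv.Perm ι → ι → ι) := by
    ext φ
    simp only [avoiding, compl_filter, not_forall, not_not, mem_inf, mem_filter, mem_univ,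
      true_and, forall_const, mem_image]
    exact ⟨fun h => ⟨.ofBijective φ (Finite.surjective_iff_bijective.mp h), rfl⟩,
      fun ⟨σ, hσ⟩ => hσ ▸ σ.surjective⟩
  have h_into (t : Finset ι) : t.inf avoiding = Fintype.piFinset fun _ => tᶜ := by
    ext φ
    simp only [avoiding, mem_inf, mem_filter, mem_univ, true_and, Fintype.mem_piFinset, mem_compl]
    exact ⟨fun h i hi => h _ hi i rfl, fun h s hs i hi => h i (hi ▸ hs)⟩
  rw [← sum_image (f := fun φ => ∏ i, v i (φ i)) fun σ _ τ _ h => DFunLike.coe_injective h,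
    ← h_surj, inclusion_exclusion_sum_inf_compl]
  refine sum_congr rfl fun t _ => ?_
  rw [h_into, ← prod_univ_sum, zsmul_eq_mul, Int.cast_pow, Int.cast_neg, Int.cast_one]

theorem sum_perm_prod_X_pow_mem_span {R σ : Type*} [CommRing R] [Fintype σ] [DecidableEq σ]
    {n : ℕ} {d : σ → ℕ} (hd : ∀ i, d i ≤ n) :
    ∑ e : Equiv.Perm σ, ∏ i, (X i : MvPolynomial σ R) ^ d (e i) ∈
      Submodule.span R {Q | ∃ h : R[X], h.natDegree ≤ n ∧ Q = ∏ i, Polynomial.aeval (X i) h} := by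
  rw [sum_perm_prod_eq_sum_powerset fun i s => (X i : MvPolynomial σ R) ^ d s]
  refine Submodule.sum_mem _ fun t _ => ?_
  have h_smul : ((-1 : MvPolynomial σ R) ^ #t * ∏ i, ∑ s ∈ tᶜ, X i ^ d s)
      = (-1 : R) ^ #t • ∏ i, Polynomial.aeval (X i) (∑ s ∈ tᶜ, (Polynomial.X : R[X]) ^ d s) := by
    simp [Algebra.smul_def]
  rw [h_smul]
  refine Submodule.smul_mem _ _ (Submodule.subset_span ⟨_, ?_, rfl⟩)
  exact Polynomial.natDegree_sum_le_of_forall_le _ _ fun s _ =>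
    (Polynomial.natDegree_X_pow_le _).trans (hd s)

theorem sum_perm_rename_eq {R σ : Type*} [CommRing R] [Fintype σ] [DecidableEq σ]
    (P : MvPolynomial σ R) :
    ∑ e : Equiv.Perm σ, rename e P
      = ∑ d ∈ P.support,
          coeff d P • ∑ e : Equiv.Perm σ, ∏ i, (X i : MvPolynomial σ R) ^ d (e i) := by
  conv_lhs => rw [P.as_sum]
  simp only [map_sum, smul_sum]
  rw [sum_comm]
  refine sum_congr rfl fun d _ => ?_
  rw [← Equiv.sum_comp (Equiv.inv (Equiv.Perm σ))]
  refine sum_congr rfl fun e _ => ?_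
  rw [monomial_eq, Finsupp.prod_fintype _ _ fun i => pow_zero _, map_mul, rename_C, map_prod,
    MvPolynomial.smul_eq_C_mul, ← Equiv.prod_comp e]
  simp

theorem MvPolynomial.IsSymmetric.mem_span_prod_aeval {K σ : Type*} [Field K] [CharZero K]
    [Fintype σ] [DecidableEq σ] {P : MvPolynomial σ K} (hP : P.IsSymmetric) {n : ℕ}
    (hdeg : ∀ i, P.degreeOf i ≤ n) :
    P ∈ Submodule.span K {Q | ∃ h : K[X], h.natDegree ≤ n ∧ Q = ∏ i, Polynomial.aeval (X i) h} := by
  have h_card : (Fintype.card (Equiv.Perm σ) : K) ≠ 0 := Nat.cast_ne_zero.mpr Fintype.card_ne_zero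
  have h_avg : P = (Fintype.card (Equiv.Perm σ) : K)⁻¹ • ∑ e : Equiv.Perm σ, rename e P := by
    simp only [hP _, sum_const, card_univ, ← Nat.cast_smul_eq_nsmul K, inv_smul_smul₀ h_card]
  rw [h_avg, sum_perm_rename_eq]
  refine Submodule.smul_mem _ _ (Submodule.sum_mem _ fun d hd => Submodule.smul_mem _ _ ?_)
  exact sum_perm_prod_X_pow_mem_span fun i => (le_degreeOf_of_mem_support i hd).trans (hdeg i)

theorem MvPolynomial.eval_prod_aeval_X {R σ : Type*} [CommRing R] [Fintype σ] (w : σ → R)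
    (h : R[X]) : eval w (∏ i, Polynomial.aeval (X i) h) = ∏ i, h.eval (w i) := by
  rw [map_prod]
  refine prod_congr rfl fun i _ => ?_
  change aeval w (Polynomial.aeval (X i) h) = _
  rw [← Polynomial.aeval_algHom_apply, aeval_X, Polynomial.coe_aeval_eq_eval]

theorem MvPolynomial.eval_eq_sum_of_mem_span {R σ ι : Type*} [CommRing R] [Fintype ι]
    {s : Set (MvPolynomial σ R)} {x : σ → R} {w : ι → σ → R} {c : ι → R}
    (hs : ∀ Q ∈ s, eval x Q = ∑ k, eval (w k) Q * c k) {P : MvPolynomial σ R}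
    (hP : P ∈ Submodule.span R s) : eval x P = ∑ k, eval (w k) P * c k := by
  induction hP using Submodule.span_induction with
  | mem Q hQ => exact hs Q hQ
  | zero => simp
  | add Q₁ Q₂ _ _ h₁ h₂ => simp [h₁, h₂, add_mul, sum_add_distrib]
  | smul a Q _ h => simp [h, mul_sum, mul_assoc]

theorem Polynomial.Splits.prod_eval_eq {R ι : Type*} [CommRing R] [IsDomain R] [Fintype ι]
    {h : R[X]} (hh : h.Splits) (w : ι → R) :
    ∏ i, h.eval (w i)
      = h.leadingCoeff ^ Fintype.card ι * (h.roots.map fun a => ∏ i, (w i - a)).prod := by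
  simp_rw [hh.eval_eq_prod_roots, prod_mul_distrib, prod_const, card_univ, prod_eq_multiset_prod]
  rw [Multiset.prod_map_prod_map]

theorem Lagrange.eval_zero_basis {K ι : Type*} [Field K] [DecidableEq ι] (s : Finset ι)
    (v : ι → K) (k : ι) :
    (Lagrange.basis s v k).eval 0 = ∏ j ∈ s.erase k, v j / (v j - v k) := by
  simp only [Lagrange.basis, Lagrange.basisDivisor, Polynomial.eval_prod, Polynomial.eval_mul,
    Polynomial.eval_C, Polynomial.eval_sub, Polynomial.eval_X]
  refine prod_congr rfl fun j _ => ?_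
  rw [← neg_sub, inv_neg, zero_sub, neg_mul_neg, inv_mul_eq_div]

theorem prod_eval_eq_sum_mul_eval_zero_basis {K ι κ : Type*} [Field K] [Fintype ι] [Fintype κ]
    [DecidableEq κ] {x : ι → K} {w : κ → ι → K} {z : κ → K} (hz : Function.Injective z)
    {G : K → K} (hw : ∀ k u, ∏ i, (w k i - u) = ∏ i, (x i - u) - z k * G u)
    {h : K[X]} (hh : h.Splits) (hdeg : h.natDegree < Fintype.card κ) :
    ∏ i, h.eval (x i) = ∑ k, (∏ i, h.eval (w k i)) * (Lagrange.basis univ z k).eval 0 := by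
  set N : K[X] := Polynomial.C (h.leadingCoeff ^ Fintype.card ι) *
    (h.roots.map fun a => Polynomial.C (-G a) * Polynomial.X + Polynomial.C (∏ i, (x i - a))).prod
  have hN (t : K) : N.eval t = h.leadingCoeff ^ Fintype.card ι *
      (h.roots.map fun a => ∏ i, (x i - a) - t * G a).prod := by
    simp only [N, Polynomial.eval_mul, Polynomial.eval_C, Polynomial.eval_multiset_prod,
      Multiset.map_map, Function.comp_def, Polynomial.eval_add, Polynomial.eval_X]
    congr 2
    exact Multiset.map_congr rfl fun a _ => by ring
  have hN_deg : N.degree < #(univ : Finset κ) := by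
    refine (Polynomial.degree_le_natDegree).trans_lt ?_
    rw [card_univ, Nat.cast_lt]
    refine (Polynomial.natDegree_C_mul_le _ _).trans_lt ?_
    refine (Polynomial.natDegree_multiset_prod_le _).trans_lt ?_
    refine lt_of_le_of_lt ?_ ((h.card_roots').trans_lt hdeg)
    rw [Multiset.map_map]
    refine (Multiset.sum_map_le_sum_map _ (fun _ => 1) fun _ _ =>
      Polynomial.natDegree_linear_le).trans ?_
    simp
  have h_interp := congrArg (Polynomial.eval 0) (Lagrange.eq_interpolate hz.injOn hN_deg)
  simp only [Lagrange.interpolate_apply, Polynomial.eval_finsetSum, Polynomial.eval_mul,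
    Polynomial.eval_C] at h_interp
  have h_zero : N.eval 0 = ∏ i, h.eval (x i) := by
    rw [hN, hh.prod_eval_eq]
    simp only [zero_mul, sub_zero]
  have h_node (k : κ) : N.eval (z k) = ∏ i, h.eval (w k i) := by
    rw [hN, hh.prod_eval_eq]
    simp only [hw]
  rw [← h_zero, h_interp]
  simp only [h_node]

theorem MvPolynomial.IsSymmetric.eval_eq_sum_mul_eval_zero_basis {K ι κ : Type*} [Field K]
    [CharZero K] [IsAlgClosed K] [Fintype ι] [DecidableEq ι] [Fintype κ] [DecidableEq κ]
    {P : MvPolynomial ι K} (hP : P.IsSymmetric) {n : ℕ} (hdeg : ∀ i, P.degreeOf i ≤ n)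
    (hn : n < Fintype.card κ) {x : ι → K} {w : κ → ι → K} {z : κ → K}
    (hz : Function.Injective z) {G : K → K}
    (hw : ∀ k u, ∏ i, (w k i - u) = ∏ i, (x i - u) - z k * G u) :
    eval x P = ∑ k, eval (w k) P * (Lagrange.basis univ z k).eval 0 := by
  refine eval_eq_sum_of_mem_span ?_ (hP.mem_span_prod_aeval hdeg)
  rintro _ ⟨h, hh, rfl⟩
  simp only [eval_prod_aeval_X]
  exact prod_eval_eq_sum_mul_eval_zero_basis hz hw (IsAlgClosed.splits h) (hh.trans_lt hn)

theorem deriv_prod_sub {𝕜 ι : Type*} [NontriviallyNormedField 𝕜] (s : Finset ι) (x : ι → 𝕜)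
    {b : 𝕜} (hx : ∀ j ∈ s, x j ≠ b) :
    deriv (fun u => ∏ j ∈ s, (x j - u)) b = -(∏ j ∈ s, (x j - b)) * ∑ j ∈ s, 1 / (x j - b) := by
  have h_ne : ∏ j ∈ s, (x j - b) ≠ 0 := prod_ne_zero_iff.mpr fun j hj => sub_ne_zero.mpr (hx j hj)
  have h_log := logDeriv_prod (f := fun j u => x j - u) (x := b)
    (fun j hj => sub_ne_zero.mpr (hx j hj)) fun j _ => by fun_prop
  rw [logDeriv_apply, div_eq_iff h_ne] at h_log
  rw [h_log, mul_comm, neg_mul, ← mul_neg, ← sum_neg_distrib]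
  congr 1
  refine sum_congr rfl fun j _ => ?_
  simp [logDeriv_apply, neg_div]

theorem sum_one_div_sub_sub_sum_one_div_sub {𝕜 ι κ μ : Type*} [NontriviallyNormedField 𝕜]
    [Fintype ι] [Fintype κ] [Fintype μ] {x : ι → 𝕜} {y : κ → 𝕜} {b' : μ → 𝕜} {b c : 𝕜}
    (hx : ∀ j, x j ≠ b) (hy : ∀ j, y j ≠ b)
    (h : ∀ u, (b - u) * ∏ m, (b' m - u) = ∏ j, (x j - u) - c * ∏ j, (y j - u)) :
    ∑ j, 1 / (x j - b) - ∑ j, 1 / (y j - b) = (∏ m, (b' m - b)) / ∏ j, (x j - b) := by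
  have hF : ∏ j, (x j - b) ≠ 0 := prod_ne_zero_iff.mpr fun j _ => sub_ne_zero.mpr (hx j)
  have hcG : c * ∏ j, (y j - b) = ∏ j, (x j - b) := by linear_combination h b
  have h_deriv := congrArg (deriv · b) (funext h)
  rw [deriv_fun_sub (by fun_prop) (by fun_prop), deriv_const_mul_field,
    deriv_prod_sub _ _ fun j _ => hx j, deriv_prod_sub _ _ fun j _ => hy j,
    deriv_fun_mul (by fun_prop) (by fun_prop)] at h_deriv
  have h_sub : deriv (fun u => b - u) b = -1 := by simp
  simp only [h_sub, sub_self, zero_mul, add_zero] at h_deriv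
  rw [eq_div_iff hF]
  linear_combination h_deriv + (∑ j, 1 / (y j - b)) * hcG

theorem prod_div_sub_div_prod_eq {K κ μ : Type*} [Field K] [Fintype κ] [DecidableEq κ]
    [Fintype μ] {b f g z : κ → K} {c : μ → K} {k : κ}
    (hf : ∀ j, f j ≠ 0) (hg : ∀ j, g j ≠ 0) (hfg : ∀ j, f j = z j * g j)
    (hc : ∀ m, c m ≠ b k) (hD : ∀ j ≠ k, (b k - b j) * ∏ m, (c m - b j) ≠ 0)
    (hw : ∀ j, (b k - b j) * ∏ m, (c m - b j) = f j - z k * g j) :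
    (∏ j ∈ univ.erase k, z j / (z j - z k)) / ∏ j, f j
      = (∏ m, (c m - b k)) / f k / ((∏ j ∈ univ.erase k, (b k - b j)) * ∏ j, ∏ m, (c m - b j)) := by
  have h_node (j) (hj : j ∈ univ.erase k) :
      z j / (z j - z k) = f j / ((b k - b j) * ∏ m, (c m - b j)) := by
    rw [hw, hfg j, ← sub_mul, mul_div_mul_right _ _ (hg j)]
  have hQ : ∏ m, (c m - b k) ≠ 0 := prod_ne_zero_iff.mpr fun m _ => sub_ne_zero.mpr (hc m)
  have hf' : ∏ j ∈ univ.erase k, f j ≠ 0 := prod_ne_zero_iff.mpr fun j _ => hf j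
  have hD' : ∏ j ∈ univ.erase k, ((b k - b j) * ∏ m, (c m - b j)) ≠ 0 :=
    prod_ne_zero_iff.mpr fun j hj => hD j (ne_of_mem_erase hj)
  rw [prod_congr rfl h_node, prod_div_distrib, ← mul_prod_erase univ f (mem_univ k),
    ← mul_prod_erase univ (fun j => ∏ m, (c m - b j)) (mem_univ k)]
  rw [prod_mul_distrib] at hD' ⊢
  field_simp [hf k]

theorem vecCons'_eq_cons {r : ℕ} (c : ℂ) (v : Fin r → ℂ) :
    vecCons' (r := r + 1) c v = Fin.cons c v := by
  funext i
  refine Fin.cases ?_ (fun i => ?_) i <;> simp [vecCons']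

theorem factored_partial_fraction_degenerate_general
    (r n l : ℕ) (hr : 1 ≤ r)
    (P : MvPolynomial (Fin r) ℂ) (hPsym : P.IsSymmetric)
    (hPdeg : ∀ i : Fin r, P.degreeOf i ≤ n)
    (b : Fin (n + 1) → ℂ) (hb : Function.Injective b)
    (x : Fin r → ℂ)
    (hxb : ∀ (m : Fin r) (j : Fin (n + 1)), x m ≠ b j)
    (y : Fin l → ℂ)
    (hyb : ∀ (m : Fin l) (j : Fin (n + 1)), y m ≠ b j)
    (b' : Fin (n + 1) → Fin (r - 1) → ℂ)
    (hpoly : ∀ k, ∀ u : ℂ,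
      (b k - u) * ∏ m : Fin (r - 1), (b' k m - u)
        = (∏ j, (x j - u))
            - (∏ j : Fin l, ((y j - u) / (y j - b k))) * ∏ j, (x j - b k))
    (hb' : ∀ k (m : Fin (r - 1)) (j : Fin (n + 1)), b' k m ≠ b j) :
    eval x P / ∏ j, ∏ m, (x m - b j)
      = ∑ k, (eval (vecCons' (b k) (b' k)) P
            / ((∏ j ∈ Finset.univ.erase k, (b k - b j))
                * ∏ j, ∏ m : Fin (r - 1), (b' k m - b j)))
          * ((∑ j, 1 / (x j - b k)) - ∑ j : Fin l, 1 / (y j - b k)) := by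
  obtain ⟨r, rfl⟩ : ∃ r', r = r' + 1 := ⟨r - 1, by omega⟩
  set F : ℂ → ℂ := fun u => ∏ j, (x j - u)
  set G : ℂ → ℂ := fun u => ∏ j, (y j - u)
  set z : Fin (n + 1) → ℂ := fun k => F (b k) / G (b k)
  have hF (k) : F (b k) ≠ 0 := prod_ne_zero_iff.mpr fun j _ => sub_ne_zero.mpr (hxb j k)
  have hG (k) : G (b k) ≠ 0 := prod_ne_zero_iff.mpr fun j _ => sub_ne_zero.mpr (hyb j k)
  have hw (k u) : (b k - u) * ∏ m, (b' k m - u) = F u - z k * G u := by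
    rw [hpoly]
    simp only [F, G, z, prod_div_distrib]
    ring
  have hD (k j) (hjk : j ≠ k) : (b k - b j) * ∏ m, (b' k m - b j) ≠ 0 :=
    mul_ne_zero (sub_ne_zero.mpr fun h => hjk (hb h).symm)
      (prod_ne_zero_iff.mpr fun m _ => sub_ne_zero.mpr (hb' k m j))
  have hz : Function.Injective z := fun k j hkj => by
    by_contra hjk
    exact hD k j (Ne.symm hjk) (by rw [hw, hkj, div_mul_cancel₀ _ (hG j), sub_self])
  rw [hPsym.eval_eq_sum_mul_eval_zero_basis (w := fun k => Fin.cons (b k) (b' k)) hPdeg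
    (by simp) hz (fun k u => by rw [Fin.prod_univ_succ]; exact hw k u), sum_div]
  refine sum_congr rfl fun k _ => ?_
  rw [vecCons'_eq_cons, Lagrange.eval_zero_basis, mul_div_assoc,
    sum_one_div_sub_sub_sum_one_div_sub (fun j => hxb j k) (fun j => hyb j k) (hw k),
    prod_div_sub_div_prod_eq (f := fun j => F (b j)) hF hG
      (fun j => (div_mul_cancel₀ _ (hG j)).symm) (fun m => hb' k m k) (hD k) (fun j => hw k (b j))]
  simp only [F]
  ring

/-- Equation (2.10): the degenerate partial fraction identity (fipf) for
factored denominators. -/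
theorem factored_partial_fraction_degenerate
    (r n l : ℕ) (hr : 1 ≤ r) (hl : l < r)
    (P : MvPolynomial (Fin r) ℂ) (hPsym : P.IsSymmetric)
    (hPdeg : ∀ i : Fin r, P.degreeOf i ≤ n)
    (b : Fin (n + 1) → ℂ) (hb : Function.Injective b)
    (x : Fin r → ℂ)
    (hxb : ∀ (m : Fin r) (j : Fin (n + 1)), x m ≠ b j)
    (y : Fin l → ℂ)
    (hyb : ∀ (m : Fin l) (j : Fin (n + 1)), y m ≠ b j)
    (b' : Fin (n + 1) → Fin (r - 1) → ℂ)
    (hpoly : ∀ k, ∀ u : ℂ,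
      (b k - u) * ∏ m : Fin (r - 1), (b' k m - u)
        = (∏ j, (x j - u))
            - (∏ j : Fin l, ((y j - u) / (y j - b k))) * ∏ j, (x j - b k))
    (hb' : ∀ k (m : Fin (r - 1)) (j : Fin (n + 1)), b' k m ≠ b j) :
    eval x P / ∏ j, ∏ m, (x m - b j)
      = ∑ k, (eval (vecCons' (b k) (b' k)) P
            / ((∏ j ∈ Finset.univ.erase k, (b k - b j))
                * ∏ j, ∏ m : Fin (r - 1), (b' k m - b j)))
          * ((∑ j, 1 / (x j - b k)) - ∑ j : Fin l, 1 / (y j - b k)) :=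
  factored_partial_fraction_degenerate_general r n l hr P hPsym hPdeg b hb x hxb y hyb b' hpoly hb'
end

section
/- Let n ≥ 0 be an integer, a ∈ ℂ, and let x ∈ ℂ be such that x + k ≠ 0 for all k ∈ {0,1,…,n}. Then (a+x)_n / (x)_{n+1} = ∑_{k=0}^{n} [ (−1)^k (a−k)_n / (k! (n−k)!) ] · 1/(x+k). -/
/-!
Both sides are the partial fraction decomposition of `P(x) / (x)_{n+1}`, where
`P(x) = (a+x)_n` has degree `n` and `(x)_{n+1} = ∏_{k ≤ n} (x + k)` is the nodal polynomial of the
nodes `0, -1, …, -n`. Lagrange interpolation of `P` at these nodes (first barycentric form) gives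
`P(x) / (x)_{n+1} = ∑_k w_k P(-k) / (x + k)` with nodal weights
`w_k = ∏_{j ≠ k} (j - k)⁻¹ = (-1)^k / (k! (n-k)!)`, and `P(-k) = (a-k)_n`.
-/

open Finset

/-- The Pochhammer symbol `(z)_k = z(z+1)⋯(z+k-1)`, with `(z)_0 = 1`. -/
noncomputable def poch (z : ℂ) (k : ℕ) : ℂ := ∏ j ∈ Finset.range k, (z + j)

open Polynomial Lagrange
open scoped Nat

theorem eval_div_eval_nodal_eq_sum {F ι : Type*} [Field F] [DecidableEq ι] {s : Finset ι}
    {v : ι → F} {f : F[X]} {x : F} (hvs : Set.InjOn v s) (hf : f.degree < #s)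
    (hx : ∀ i ∈ s, x ≠ v i) :
    f.eval x / (nodal s v).eval x = ∑ i ∈ s, nodalWeight s v i * f.eval (v i) / (x - v i) := by
  conv_lhs => rw [eq_interpolate hvs hf, eval_interpolate_not_at_node _ hx]
  rw [mul_div_cancel_left₀ _ (eval_nodal_not_at_node hx)]
  refine Finset.sum_congr rfl fun i _ => ?_
  ring

section CommRing

variable {R : Type*} [CommRing R]

theorem prod_range_natCast_sub_self (k : ℕ) :
    ∏ j ∈ range k, ((j : R) - k) = (-1) ^ k * k ! := by
  have h : ∏ j ∈ range k, ((k : R) - j) = k ! := by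
    rw [prod_range_natCast_sub, ← Nat.descFactorial_eq_prod_range, Nat.descFactorial_self]
  simpa [h] using prod_neg (s := range k) fun j => (k : R) - j

theorem prod_Ico_natCast_sub (k n : ℕ) :
    ∏ j ∈ Ico (k + 1) (n + 1), ((j : R) - k) = (n - k)! := by
  rw [prod_Ico_eq_prod_range, Nat.add_sub_add_right, ← prod_range_add_one_eq_factorial]
  push_cast
  refine Finset.prod_congr rfl fun i _ => ?_
  ring

theorem prod_erase_range_natCast_sub {k n : ℕ} (hk : k ≤ n) :
    ∏ j ∈ (range (n + 1)).erase k, ((j : R) - k) = (-1) ^ k * k ! * (n - k)! := by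
  have hsplit : (range (n + 1)).erase k = range k ∪ Ico (k + 1) (n + 1) := by
    ext j; simp only [mem_erase, mem_range, mem_union, mem_Ico]; omega
  have hdisj : Disjoint (range k) (Ico (k + 1) (n + 1)) := by
    rw [disjoint_left]; intro j; simp only [mem_range, mem_Ico]; omega
  rw [hsplit, prod_union hdisj, prod_range_natCast_sub_self, prod_Ico_natCast_sub]

end CommRing

theorem nodalWeight_range_neg_natCast {F : Type*} [Field F] {k n : ℕ} (hk : k ≤ n) :
    nodalWeight (range (n + 1)) (fun j : ℕ => -(j : F)) k = (-1) ^ k / (k ! * (n - k)!) := by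
  have hsub : ∀ j : ℕ, -(k : F) - -(j : F) = j - k := fun j => by ring
  rw [nodalWeight, prod_inv_distrib]
  simp_rw [hsub]
  rw [prod_erase_range_natCast_sub hk, mul_assoc, mul_inv, ← inv_pow, inv_neg_one, div_eq_mul_inv]

theorem eval_nodal_range_neg_add_natCast (c y : ℂ) (n : ℕ) :
    (nodal (range n) fun j : ℕ => -(c + j)).eval y = poch (c + y) n := by
  rw [eval_nodal, poch]
  refine Finset.prod_congr rfl fun j _ => ?_
  ring

/-- Equation (2.1)/(2.2): the finite partial fraction expansion of the
truncated beta function. -/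
theorem beta_partial_fraction (n : ℕ) (a x : ℂ)
    (hx : ∀ k : ℕ, k ≤ n → x + k ≠ 0) :
    poch (a + x) n / poch x (n + 1)
      = ∑ k ∈ Finset.range (n + 1),
          ((-1 : ℂ) ^ k * poch (a - k) n
            / ((k.factorial : ℂ) * ((n - k).factorial : ℂ)))
          * (1 / (x + k)) := by
  have hinj : Set.InjOn (fun j : ℕ => -(j : ℂ)) (range (n + 1)) :=
    (neg_injective.comp Nat.cast_injective).injOn
  have hdeg : (nodal (range n) fun j : ℕ => -(a + j)).degree < #(range (n + 1)) := by
    rw [degree_nodal, card_range, card_range]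
    exact_mod_cast n.lt_succ_self
  have hnode : ∀ k ∈ range (n + 1), x ≠ -(k : ℂ) := fun k hk h =>
    hx k (mem_range_succ_iff.mp hk) (by rw [h, neg_add_cancel])
  have hden : (nodal (range (n + 1)) fun j : ℕ => -(j : ℂ)).eval x = poch x (n + 1) := by
    simp only [eval_nodal, sub_neg_eq_add, poch]
  have hpartial := eval_div_eval_nodal_eq_sum hinj hdeg hnode
  rw [eval_nodal_range_neg_add_natCast, hden] at hpartial
  rw [hpartial]
  refine Finset.sum_congr rfl fun k hk => ?_
  rw [nodalWeight_range_neg_natCast (mem_range_succ_iff.mp hk), eval_nodal_range_neg_add_natCast,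
    sub_neg_eq_add, ← sub_eq_add_neg]
  ring
end

section
/- Let x₁, x₂ ∈ ℂ with 0 < Re(x₁), 0 < Re(x₂) and Re(x₁+x₂) < 1, and suppose x₁ and x₂ are not nonpositive integers. Then the series ∑_{k=0}^{∞} [ (−1)^k (x₁+x₂)_k / k! ] · ( 1/(x₁+k) + 1/(x₂+k) ) converges absolutely and its sum equals Γ(x₁)Γ(x₂)/Γ(x₁+x₂). -/
open Finset Filter Topology Complex

/-!
The coefficient `(-1)^k (s)_k / k!` is the binomial coefficient `Ring.choose (-s) k` of
`(1 + w)^(-s)`, and `1 / (x + k) = ∫₀^{1/2} u^(x+k-1) (1-u)^(-x-k-1) du`, the integrand being the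
derivative of `(u / (1-u))^(x+k) / (x+k)`. Summing under the integral, with `w = u / (1-u)`,
gives `∑ₖ (-1)^k (s)_k / k! / (x + k) = ∫₀^{1/2} u^(x-1) (1-u)^(s-x-1) du`. For `s = x₁ + x₂`
the two integrals coming from `x₁` and `x₂` glue, after `u ↦ 1 - u` in the second, to the beta
integral `B(x₁, x₂) = Γ(x₁) Γ(x₂) / Γ(x₁ + x₂)`.

The interchange of sum and integral, like the absolute convergence, rests on
`‖(s)_k / k!‖ = O(k^(Re s - 1))`, which follows from Gauss's product `GammaSeq s k → Γ(s) ≠ 0`.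
-/

open MeasureTheory Set

theorem ring_choose_neg_eq_poch (s : ℂ) (k : ℕ) :
    Ring.choose (-s) k = (-1) ^ k * poch s k / k.factorial := by
  have : ∏ j ∈ range k, (-s - j) = ∏ j ∈ range k, ((-1) * (s + j)) :=
    prod_congr rfl fun j _ => by ring
  rw [Ring.choose_eq_smul, ← Polynomial.aeval_eq_smeval, Polynomial.aeval_def,
    Polynomial.eval₂_eq_eval_map, descPochhammer_map, descPochhammer_eval_eq_prod_range, this,
    prod_mul_distrib, prod_const, card_range, poch, smul_eq_mul, inv_mul_eq_div]

theorem hasSum_ring_choose_mul_pow (a : ℂ) {w : ℂ} (hw : ‖w‖ < 1) :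
    HasSum (fun k : ℕ => Ring.choose a k * w ^ k) ((1 + w) ^ a) := by
  have := (one_add_cpow_hasFPowerSeriesOnBall_zero (a := a)).hasSum (y := w)
    (by simpa [← ofReal_norm] using hw)
  simpa [binomialSeries, FormalMultilinearSeries.ofScalars_apply_eq, mul_comm] using this

theorem re_add_natCast_le_norm (x : ℂ) (n : ℕ) : x.re + n ≤ ‖x + n‖ := by
  simpa using re_le_norm (x + n)

theorem add_natCast_ne_zero_of_re_pos {s : ℂ} (hs : 0 < s.re) (n : ℕ) : s + n ≠ 0 :=
  norm_pos_iff.1 ((by positivity : 0 < s.re + n).trans_le (re_add_natCast_le_norm s n))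

theorem ring_choose_neg_mul_GammaSeq {s : ℂ} (hs : 0 < s.re) (n : ℕ) :
    Ring.choose (-s) n * GammaSeq s n * (s + n) = (-1) ^ n * (n : ℂ) ^ s := by
  have hpoch : poch s n ≠ 0 := prod_ne_zero_iff.2 fun j _ => add_natCast_ne_zero_of_re_pos hs j
  rw [ring_choose_neg_eq_poch, GammaSeq, prod_range_succ, ← poch]
  field_simp [add_natCast_ne_zero_of_re_pos hs n, hpoch, n.factorial_ne_zero]

theorem eventually_norm_ring_choose_neg_le {s : ℂ} (hs : 0 < s.re) :
    ∀ᶠ n : ℕ in atTop, ‖Ring.choose (-s) n‖ ≤ 2 / ‖Gamma s‖ * (n : ℝ) ^ (s.re - 1) := by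
  have hΓ : 0 < ‖Gamma s‖ := norm_pos_iff.2 (Gamma_ne_zero_of_re_pos hs)
  filter_upwards [(GammaSeq_tendsto_Gamma s).norm.eventually (lt_mem_nhds (half_lt_self hΓ)),
    eventually_gt_atTop 0] with n hn hn0
  have hn0' : (0 : ℝ) < n := by exact_mod_cast hn0
  have key := congrArg norm (ring_choose_neg_mul_GammaSeq hs n)
  rw [norm_mul, norm_mul, norm_mul, norm_pow, norm_neg, norm_one, one_pow, one_mul,
    norm_natCast_cpow_of_pos hn0] at key
  rw [Real.rpow_sub_one hn0'.ne', show 2 / ‖Gamma s‖ * ((n : ℝ) ^ s.re / n)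
    = 2 * (n : ℝ) ^ s.re / (n * ‖Gamma s‖) by ring, le_div_iff₀ (by positivity)]
  calc ‖Ring.choose (-s) n‖ * (n * ‖Gamma s‖) = ‖Ring.choose (-s) n‖ * n * ‖Gamma s‖ := by ring
    _ ≤ ‖Ring.choose (-s) n‖ * ‖s + n‖ * (2 * ‖GammaSeq s n‖) := by
        gcongr
        · exact (le_add_of_nonneg_left hs.le).trans (re_add_natCast_le_norm s n)
        · linarith
    _ = 2 * (n : ℝ) ^ s.re := by rw [← key]; ring

theorem summable_norm_ring_choose_neg_div {s : ℂ} (hs0 : 0 < s.re) (hs1 : s.re < 1) {a : ℝ}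
    (ha : 0 < a) : Summable fun n : ℕ => ‖Ring.choose (-s) n‖ / (a + n) := by
  refine Summable.of_norm_bounded_eventually
    ((Real.summable_nat_rpow.2 (by linarith : s.re - 2 < -1)).mul_left (2 / ‖Gamma s‖)) ?_
  rw [Nat.cofinite_eq_atTop]
  filter_upwards [eventually_norm_ring_choose_neg_le hs0, eventually_gt_atTop 0] with n hn hn0
  have hn0' : (0 : ℝ) < n := by exact_mod_cast hn0
  rw [Real.norm_of_nonneg (by positivity)]
  calc ‖Ring.choose (-s) n‖ / (a + n) ≤ ‖Ring.choose (-s) n‖ / n :=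
        div_le_div_of_nonneg_left (norm_nonneg _) hn0' (by linarith)
    _ ≤ 2 / ‖Gamma s‖ * (n : ℝ) ^ (s.re - 1) / n := by gcongr
    _ = 2 / ‖Gamma s‖ * (n : ℝ) ^ (s.re - 2) := by
        rw [show s.re - 2 = s.re - 1 - 1 by ring, Real.rpow_sub_one hn0'.ne' (s.re - 1)]; ring

theorem summable_norm_ring_choose_neg_div_add_natCast {s x : ℂ} (hs0 : 0 < s.re)
    (hs1 : s.re < 1) (hx : 0 < x.re) :
    Summable fun k : ℕ => ‖Ring.choose (-s) k / (x + k)‖ := by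
  refine (summable_norm_ring_choose_neg_div hs0 hs1 hx).of_nonneg_of_le (fun _ => norm_nonneg _)
    fun k => ?_
  rw [norm_div]
  gcongr
  exact re_add_natCast_le_norm x k

noncomputable def betaKernel (a : ℂ) (u : ℝ) : ℂ := (u : ℂ) ^ (a - 1) * (1 - (u : ℂ)) ^ (-a - 1)

theorem one_sub_ofReal_mem_slitPlane {u : ℝ} (hu : u < 1) : 1 - (u : ℂ) ∈ slitPlane := by
  rw [← ofReal_one, ← ofReal_sub]; exact ofReal_mem_slitPlane.2 (by linarith)

theorem hasDerivAt_betaKernel_primitive {a : ℂ} (ha : a ≠ 0) {u : ℝ} (hu : u ∈ Ioo (0 : ℝ) 1) :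
    HasDerivAt (fun v : ℝ => (v : ℂ) ^ a * (1 - (v : ℂ)) ^ (-a) / a) (betaKernel a u) u := by
  have hu0 : (u : ℂ) ≠ 0 := ofReal_ne_zero.2 hu.1.ne'
  have hu1 : 1 - (u : ℂ) ≠ 0 := slitPlane_ne_zero (one_sub_ofReal_mem_slitPlane hu.2)
  have h₁ := ((hasDerivAt_id (u : ℂ)).cpow_const (c := a)
    (ofReal_mem_slitPlane.2 hu.1)).comp_ofReal
  have h₂ := (((hasDerivAt_id (u : ℂ)).const_sub 1).cpow_const (c := -a)
    (one_sub_ofReal_mem_slitPlane hu.2)).comp_ofReal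
  refine ((h₁.mul h₂).div_const a).congr_deriv ?_
  simp only [betaKernel, id, cpow_sub _ _ hu0, cpow_sub _ _ hu1, cpow_one]
  field_simp
  ring

theorem intervalIntegrable_betaKernel {a : ℂ} (ha : 0 < a.re) :
    IntervalIntegrable (betaKernel a) volume 0 (1 / 2) :=
  betaIntegral_convergent_left ha (-a)

theorem integral_betaKernel {a : ℂ} (ha : 0 < a.re) :
    ∫ u in Ioo (0 : ℝ) (1 / 2), betaKernel a u = 1 / a := by
  have ha0 : a ≠ 0 := fun h => by simp [h] at ha
  have hcont : ContinuousOn (fun v : ℝ => (v : ℂ) ^ a * (1 - (v : ℂ)) ^ (-a) / a)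
      (Icc 0 (1 / 2)) :=
    (((continuous_ofReal_cpow_const ha).continuousOn).mul
      ((continuous_const.sub continuous_ofReal).continuousOn.cpow_const
        fun _ hv => one_sub_ofReal_mem_slitPlane (by linarith [hv.2]))).div_const a
  have hFTC := intervalIntegral.integral_eq_sub_of_hasDerivAt_of_le (by norm_num) hcont
    (fun u hu => hasDerivAt_betaKernel_primitive ha0 ⟨hu.1, by linarith [hu.2]⟩)
    (intervalIntegrable_betaKernel ha)
  rw [intervalIntegral.integral_of_le (by norm_num), integral_Ioc_eq_integral_Ioo] at hFTC
  have hhalf : ((1 / 2 : ℝ) : ℂ) ^ a ≠ 0 := by simp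
  rw [hFTC, ofReal_zero, zero_cpow ha0, zero_mul, zero_div, sub_zero,
    show 1 - ((1 / 2 : ℝ) : ℂ) = ((1 / 2 : ℝ) : ℂ) by push_cast; ring, cpow_neg]
  field_simp

theorem ofReal_norm_betaKernel (a : ℂ) {u : ℝ} (hu : u ∈ Ioo (0 : ℝ) 1) :
    (‖betaKernel a u‖ : ℂ) = betaKernel a.re u := by
  have h1u : 0 < 1 - u := sub_pos.2 hu.2
  have h : 1 - (u : ℂ) = ((1 - u : ℝ) : ℂ) := by push_cast; ring
  rw [betaKernel, betaKernel, h, norm_mul, norm_cpow_eq_rpow_re_of_pos hu.1,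
    norm_cpow_eq_rpow_re_of_pos h1u, ofReal_mul, ofReal_cpow hu.1.le, ofReal_cpow h1u.le]
  simp

theorem integral_norm_betaKernel {a : ℂ} (ha : 0 < a.re) :
    ∫ u in Ioo (0 : ℝ) (1 / 2), ‖betaKernel a u‖ = 1 / a.re := by
  apply ofReal_injective
  rw [← integral_complex_ofReal, setIntegral_congr_fun measurableSet_Ioo
    fun u hu => ofReal_norm_betaKernel a ⟨hu.1, by linarith [hu.2]⟩,
    integral_betaKernel (by simpa using ha)]
  push_cast; rfl

theorem betaKernel_add_natCast (a : ℂ) (k : ℕ) {u : ℝ} (hu : u ∈ Ioo (0 : ℝ) 1) :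
    betaKernel (a + k) u = betaKernel a u * ((u : ℂ) / (1 - u)) ^ k := by
  have hu0 : (u : ℂ) ≠ 0 := ofReal_ne_zero.2 hu.1.ne'
  have hu1 : 1 - (u : ℂ) ≠ 0 := slitPlane_ne_zero (one_sub_ofReal_mem_slitPlane hu.2)
  rw [betaKernel, betaKernel, show a + k - 1 = (a - 1) + k by ring,
    show -(a + k) - 1 = (-a - 1) - k by ring, cpow_add _ _ hu0, cpow_sub _ _ hu1,
    cpow_natCast, cpow_natCast, div_pow]
  ring

theorem hasSum_ring_choose_mul_betaKernel (x y : ℂ) {u : ℝ} (hu : u ∈ Ioo (0 : ℝ) (1 / 2)) :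
    HasSum (fun k : ℕ => Ring.choose (-(x + y)) k * betaKernel (x + k) u)
      ((u : ℂ) ^ (x - 1) * (1 - (u : ℂ)) ^ (y - 1)) := by
  have hu' : u ∈ Ioo (0 : ℝ) 1 := ⟨hu.1, by linarith [hu.2]⟩
  have h1u : 0 < 1 - u := sub_pos.2 hu'.2
  have hcast : 1 - (u : ℂ) = ((1 - u : ℝ) : ℂ) := by push_cast; ring
  have hw : ‖(u : ℂ) / (1 - u)‖ < 1 := by
    rw [hcast, ← ofReal_div, norm_real, Real.norm_of_nonneg (div_nonneg hu.1.le h1u.le),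
      div_lt_one h1u]
    linarith [hu.2]
  have hu1 : 1 - (u : ℂ) ≠ 0 := by rw [hcast]; exact ofReal_ne_zero.2 h1u.ne'
  have h1w : 1 + (u : ℂ) / (1 - u) = (1 - (u : ℂ))⁻¹ := by field_simp; ring
  have harg : (1 - (u : ℂ)).arg ≠ Real.pi := by
    rw [hcast, arg_ofReal_of_nonneg h1u.le]; exact Real.pi_ne_zero.symm
  have hterm (k : ℕ) : betaKernel x u * (Ring.choose (-(x + y)) k * ((u : ℂ) / (1 - u)) ^ k)
      = Ring.choose (-(x + y)) k * betaKernel (x + k) u := by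
    rw [betaKernel_add_natCast x k hu']; ring
  have hsum : betaKernel x u * (1 + (u : ℂ) / (1 - u)) ^ (-(x + y))
      = (u : ℂ) ^ (x - 1) * (1 - (u : ℂ)) ^ (y - 1) := by
    rw [h1w, inv_cpow _ _ harg, ← cpow_neg, neg_neg, betaKernel, mul_assoc, ← cpow_add _ _ hu1]
    ring_nf
  simpa only [hterm, hsum] using
    (hasSum_ring_choose_mul_pow (-(x + y)) hw).mul_left (betaKernel x u)

theorem hasSum_ring_choose_neg_div {x y : ℂ} (hx : 0 < x.re) (hs0 : 0 < (x + y).re)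
    (hs1 : (x + y).re < 1) :
    HasSum (fun k : ℕ => Ring.choose (-(x + y)) k / (x + k))
      (∫ u in Ioo (0 : ℝ) (1 / 2), (u : ℂ) ^ (x - 1) * (1 - (u : ℂ)) ^ (y - 1)) := by
  have hxk (k : ℕ) : 0 < (x + k).re := by simp only [add_re, natCast_re]; positivity
  have hint (k : ℕ) : IntegrableOn (fun u => Ring.choose (-(x + y)) k * betaKernel (x + k) u)
      (Ioo 0 (1 / 2)) :=
    ((intervalIntegrable_betaKernel (hxk k)).1.mono_set Ioo_subset_Ioc_self).const_mul _
  have hnorm : Summable fun k : ℕ =>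
      ∫ u in Ioo (0 : ℝ) (1 / 2), ‖Ring.choose (-(x + y)) k * betaKernel (x + k) u‖ := by
    simp only [norm_mul, integral_const_mul, integral_norm_betaKernel (hxk _), add_re,
      natCast_re, mul_one_div]
    exact summable_norm_ring_choose_neg_div hs0 hs1 hx
  have h := hasSum_integral_of_summable_integral_norm hint hnorm
  rw [setIntegral_congr_fun measurableSet_Ioo
    fun u hu => (hasSum_ring_choose_mul_betaKernel x y hu).tsum_eq] at h
  simpa only [integral_const_mul, integral_betaKernel (hxk _), mul_one_div] using h

theorem setIntegral_Ioo_half_add_swap_eq_betaIntegral {x y : ℂ} (hx : 0 < x.re) (hy : 0 < y.re) :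
    (∫ u in Ioo (0 : ℝ) (1 / 2), (u : ℂ) ^ (x - 1) * (1 - (u : ℂ)) ^ (y - 1)) +
      (∫ u in Ioo (0 : ℝ) (1 / 2), (u : ℂ) ^ (y - 1) * (1 - (u : ℂ)) ^ (x - 1)) =
      betaIntegral x y := by
  set f : ℝ → ℂ := fun u => (u : ℂ) ^ (x - 1) * (1 - (u : ℂ)) ^ (y - 1)
  have hreflect :
      (fun u : ℝ => (u : ℂ) ^ (y - 1) * (1 - (u : ℂ)) ^ (x - 1)) = fun u => f (1 - u) := by
    funext u; simp only [f, ofReal_sub, ofReal_one, sub_sub_cancel]; ring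
  have hf := betaIntegral_convergent hx hy
  rw [← integral_Ioc_eq_integral_Ioo, ← integral_Ioc_eq_integral_Ioo,
    ← intervalIntegral.integral_of_le (by norm_num),
    ← intervalIntegral.integral_of_le (by norm_num),
    hreflect, intervalIntegral.integral_comp_sub_left f 1, sub_zero,
    show (1 : ℝ) - 1 / 2 = 1 / 2 by norm_num]
  have hsub {a b : ℝ} (ha : a ∈ uIcc (0 : ℝ) 1) (hb : b ∈ uIcc (0 : ℝ) 1) :
      IntervalIntegrable f volume a b := hf.mono_set (uIcc_subset_uIcc ha hb)
  exact intervalIntegral.integral_add_adjacent_intervals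
    (hsub (by norm_num [Set.mem_uIcc]) (by norm_num [Set.mem_uIcc]))
    (hsub (by norm_num [Set.mem_uIcc]) (by norm_num [Set.mem_uIcc]))

theorem beta_limit_expansion_general (x₁ x₂ : ℂ)
    (hre₁ : 0 < x₁.re) (hre₂ : 0 < x₂.re) (hre : (x₁ + x₂).re < 1) :
    Summable (fun k : ℕ => ‖((-1 : ℂ) ^ k * poch (x₁ + x₂) k
        / (k.factorial : ℂ)) * (1 / (x₁ + k) + 1 / (x₂ + k))‖)
    ∧ Tendsto (fun N : ℕ => ∑ k ∈ Finset.range N,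
        ((-1 : ℂ) ^ k * poch (x₁ + x₂) k / (k.factorial : ℂ))
          * (1 / (x₁ + k) + 1 / (x₂ + k)))
      atTop
      (𝓝 (Complex.Gamma x₁ * Complex.Gamma x₂
            / Complex.Gamma (x₁ + x₂))) := by
  have hs0 : 0 < (x₁ + x₂).re := by rw [add_re]; positivity
  have hs0' : 0 < (x₂ + x₁).re := by rwa [add_comm]
  have hs1' : (x₂ + x₁).re < 1 := by rwa [add_comm]
  have hterm (k : ℕ) : (-1) ^ k * poch (x₁ + x₂) k / k.factorial * (1 / (x₁ + k) + 1 / (x₂ + k))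
      = Ring.choose (-(x₁ + x₂)) k / (x₁ + k) + Ring.choose (-(x₂ + x₁)) k / (x₂ + k) := by
    rw [← ring_choose_neg_eq_poch, add_comm x₂ x₁]; ring
  simp only [hterm]
  refine ⟨?_, ?_⟩
  · exact ((summable_norm_ring_choose_neg_div_add_natCast hs0 hre hre₁).add
      (summable_norm_ring_choose_neg_div_add_natCast hs0' hs1' hre₂)).of_nonneg_of_le
      (fun _ => norm_nonneg _) fun _ => norm_add_le _ _
  · rw [Gamma_mul_Gamma_eq_betaIntegral hre₁ hre₂,
      mul_div_cancel_left₀ _ (Gamma_ne_zero_of_re_pos hs0),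
      ← setIntegral_Ioo_half_add_swap_eq_betaIntegral hre₁ hre₂]
    exact ((hasSum_ring_choose_neg_div hre₁ hs0 hre).add
      (hasSum_ring_choose_neg_div hre₂ hs0' hs1')).tendsto_sum_nat

/-- The `λ → ∞` limit of the Saha–Sinha expansion: a ₄F₃ summation for the
beta function. -/
theorem beta_limit_expansion (x₁ x₂ : ℂ)
    (hre₁ : 0 < x₁.re) (hre₂ : 0 < x₂.re) (hre : (x₁ + x₂).re < 1)
    (hx₁ : ∀ m : ℕ, x₁ ≠ -(m : ℂ))
    (hx₂ : ∀ m : ℕ, x₂ ≠ -(m : ℂ)) :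
    Summable (fun k : ℕ => ‖((-1 : ℂ) ^ k * poch (x₁ + x₂) k
        / (k.factorial : ℂ)) * (1 / (x₁ + k) + 1 / (x₂ + k))‖)
    ∧ Tendsto (fun N : ℕ => ∑ k ∈ Finset.range N,
        ((-1 : ℂ) ^ k * poch (x₁ + x₂) k / (k.factorial : ℂ))
          * (1 / (x₁ + k) + 1 / (x₂ + k)))
      atTop
      (𝓝 (Complex.Gamma x₁ * Complex.Gamma x₂
            / Complex.Gamma (x₁ + x₂))) :=
  beta_limit_expansion_general x₁ x₂ hre₁ hre₂ hre
end

section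
/- Let δ > 0 and let a, b : ℂ → ℂ be bounded functions. Then Γ(z + a(z)) / Γ(z + b(z)) is asymptotically equivalent to z^{a(z) − b(z)} as |z| → ∞ in the sector |arg z| < π − δ; that is, the quotient [ Γ(z + a(z)) / Γ(z + b(z)) ] / z^{a(z) − b(z)} tends to 1 as |z| → ∞ with |arg z| < π − δ (where z^{w} denotes the principal branch). -/
/-!
By Gauss's product formula (`Complex.GammaSeq`),
`Γ(z + a) / (Γ(z + b) z^(a - b)) = ∏_{j ≥ 0} (z + j + b) / (z + j + a) · (1 + 1 / (z + j))^(a - b)`.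
The first-order terms of the logarithm of the `j`-th factor cancel, so it is
`O(M² / ‖z + j‖²)` when `‖a‖, ‖b‖ ≤ M`. In the sector `|arg z| ≤ π - δ` one has
`‖z + j‖ ≥ c_δ (‖z‖ + j)`, so the logarithm of the whole product is `O(1 / ‖z‖)`.
Taking logarithms termwise is legitimate because `z, z + 1, z + 2, …` stay in one closed
half-plane inside the slit plane, which makes the principal logarithm telescope.
-/

open Complex Filter Topology Finset Bornology

lemma abs_arg_sub_arg_lt_pi {u v : ℂ} (hu : u ∈ slitPlane) (hv : v ∈ slitPlane)
    (huv : 0 ≤ u.im * v.im) : |arg u - arg v| < Real.pi := by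
  have upper {w : ℂ} (hw : w ∈ slitPlane) (him : 0 ≤ w.im) : 0 ≤ arg w ∧ arg w < Real.pi :=
    ⟨arg_nonneg_iff.2 him, (arg_le_pi w).lt_of_ne (slitPlane_arg_ne_pi hw)⟩
  have lower {w : ℂ} (hw : w ∈ slitPlane) (him : w.im ≤ 0) : -Real.pi < arg w ∧ arg w ≤ 0 := by
    refine ⟨neg_pi_lt_arg w, ?_⟩
    rcases him.lt_or_eq with him | him
    · exact (arg_neg_iff.2 him).le
    · have hre := (mem_slitPlane_iff.1 hw).resolve_right (not_not.2 him)
      exact (arg_eq_zero_iff.2 ⟨hre.le, him⟩).le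
  rw [abs_lt]
  rcases mul_nonneg_iff.1 huv with ⟨hu', hv'⟩ | ⟨hu', hv'⟩
  · have := upper hu hu'; have := upper hv hv'; constructor <;> linarith
  · have := lower hu hu'; have := lower hv hv'; constructor <;> linarith

lemma log_div_of_im_mul_nonneg {u v : ℂ} (hu : u ∈ slitPlane) (hv : v ∈ slitPlane)
    (huv : 0 ≤ u.im * v.im) : log (u / v) = log u - log v := by
  have harg := abs_lt.1 (abs_arg_sub_arg_lt_pi hu hv huv)
  rw [← exp_log (slitPlane_ne_zero hu), ← exp_log (slitPlane_ne_zero hv), ← exp_sub,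
    log_exp, exp_log (slitPlane_ne_zero hu), exp_log (slitPlane_ne_zero hv)] <;>
  simp only [sub_im, log_im] <;> linarith

lemma add_ofReal_mem_slitPlane {z : ℂ} (hz : z ∈ slitPlane) {x : ℝ} (hx : 0 ≤ x) :
    z + x ∈ slitPlane := by
  rw [mem_slitPlane_iff] at hz ⊢
  simp only [add_re, ofReal_re, add_im, ofReal_im, add_zero]
  exact hz.imp (fun h => by linarith) id

lemma sum_range_log_add_one_div {z : ℂ} (hz : z ∈ slitPlane) (n : ℕ) :
    ∑ j ∈ range n, log ((z + j + 1) / (z + j)) = log (z + n) - log z := by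
  have hmem (j : ℕ) : z + j ∈ slitPlane := by
    exact_mod_cast add_ofReal_mem_slitPlane hz j.cast_nonneg
  have h := sum_range_sub (fun j : ℕ => log (z + j)) n
  simp only [Nat.cast_zero, add_zero, Nat.cast_succ] at h
  rw [← h]
  refine sum_congr rfl fun j _ => ?_
  rw [← add_assoc, log_div_of_im_mul_nonneg (by simpa [add_assoc] using hmem (j + 1)) (hmem j)]
  simpa using mul_self_nonneg z.im

lemma tendsto_log_add_natCast_sub_log (c : ℂ) :
    Tendsto (fun n : ℕ => log (c + n) - log n) atTop (𝓝 0) := by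
  have hlim : Tendsto (fun n : ℕ => log (1 + c / n)) atTop (𝓝 0) := by
    have h := (tendsto_const_div_atTop_nhds_zero_nat c).const_add 1
    rw [add_zero] at h
    rw [← log_one]
    exact (continuousAt_clog one_mem_slitPlane).tendsto.comp h
  refine hlim.congr' ?_
  filter_upwards [eventually_gt_atTop ⌈-c.re⌉₊, eventually_ne_atTop 0] with n hn hn0
  have hre : 0 < (c + n).re := by
    have := Nat.lt_of_ceil_lt hn
    simp only [add_re, natCast_re]; linarith
  rw [← log_div_of_im_mul_nonneg (mem_slitPlane_iff.2 (Or.inl hre))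
    (natCast_mem_slitPlane.2 hn0) (by simp), add_div, div_self (by exact_mod_cast hn0), add_comm]

lemma norm_log_one_add_sub_self_le_sq {x : ℂ} (hx : ‖x‖ ≤ 1 / 2) :
    ‖log (1 + x) - x‖ ≤ ‖x‖ ^ 2 := by
  have hx1 : ‖x‖ < 1 := hx.trans_lt (by norm_num)
  calc ‖log (1 + x) - x‖ ≤ ‖x‖ ^ 2 * (1 - ‖x‖)⁻¹ / 2 := norm_log_one_add_sub_self_le hx1
    _ ≤ ‖x‖ ^ 2 * 2 / 2 := by
        gcongr
        rw [inv_le_comm₀ (by linarith) (by norm_num)]; linarith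
    _ = ‖x‖ ^ 2 := by ring

noncomputable def gammaRatioFactorLog (a b u : ℂ) : ℂ :=
  log ((u + b) / (u + a)) + (a - b) * log ((u + 1) / u)

lemma norm_gammaRatioFactorLog_le {a b u : ℂ} {M : ℝ} (hM : 1 ≤ M) (ha : ‖a‖ ≤ M)
    (hb : ‖b‖ ≤ M) (hu : 8 * M ≤ ‖u‖) :
    ‖gammaRatioFactorLog a b u‖ ≤ 32 * M ^ 2 / ‖u‖ ^ 2 := by
  set r := ‖u‖
  have hr : 0 < r := by linarith
  have hu0 : u ≠ 0 := norm_pos_iff.1 hr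
  have hua : r / 2 ≤ ‖u + a‖ := by
    have := norm_sub_norm_le u (-a)
    rw [norm_neg, sub_neg_eq_add] at this
    linarith
  have hua0 : u + a ≠ 0 := norm_pos_iff.1 (by linarith)
  have hab : ‖a - b‖ ≤ 2 * M := (norm_sub_le a b).trans (by linarith)
  set x₁ := (b - a) / (u + a)
  set x₂ := u⁻¹
  have hx₁ : ‖x₁‖ ≤ 4 * M / r := by
    rw [norm_div, norm_sub_rev, div_le_div_iff₀ (by linarith) hr]
    nlinarith [norm_nonneg (a - b)]
  have hx₂ : ‖x₂‖ = 1 / r := by rw [norm_inv, one_div]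
  have hsplit : gammaRatioFactorLog a b u = (log (1 + x₁) - x₁)
      + (a - b) * (log (1 + x₂) - x₂) + (a - b) * a / (u * (u + a)) := by
    have e₁ : (u + b) / (u + a) = 1 + x₁ := by simp only [x₁]; field_simp; ring
    have e₂ : (u + 1) / u = 1 + x₂ := by simp only [x₂]; field_simp
    -- the first-order terms cancel up to a term of order `‖u‖⁻²`
    have e₃ : x₁ + (a - b) * x₂ = (a - b) * a / (u * (u + a)) := by
      simp only [x₁, x₂]; field_simp; ring
    rw [gammaRatioFactorLog, e₁, e₂]
    linear_combination e₃
  have h₁ : ‖log (1 + x₁) - x₁‖ ≤ (4 * M / r) ^ 2 :=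
    (norm_log_one_add_sub_self_le_sq (hx₁.trans (by rw [div_le_iff₀ hr]; linarith))).trans
      (by gcongr)
  have h₂ : ‖(a - b) * (log (1 + x₂) - x₂)‖ ≤ 2 * M * (1 / r) ^ 2 := by
    rw [norm_mul]
    refine mul_le_mul hab ?_ (norm_nonneg _) (by linarith)
    rw [← hx₂]
    exact norm_log_one_add_sub_self_le_sq (by rw [hx₂, div_le_iff₀ hr]; linarith)
  have h₃ : ‖(a - b) * a / (u * (u + a))‖ ≤ 2 * M * M / (r * (r / 2)) := by
    rw [norm_div, norm_mul, norm_mul]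
    gcongr
  calc ‖gammaRatioFactorLog a b u‖
      ≤ (4 * M / r) ^ 2 + 2 * M * (1 / r) ^ 2 + 2 * M * M / (r * (r / 2)) := by
        rw [hsplit]
        refine (norm_add₃_le).trans ?_
        gcongr
    _ = (20 * M ^ 2 + 2 * M) / r ^ 2 := by field_simp; ring
    _ ≤ 32 * M ^ 2 / r ^ 2 := by gcongr; nlinarith

lemma add_ne_zero_of_norm_lt {u c : ℂ} (h : ‖c‖ < ‖u‖) : u + c ≠ 0 := by
  intro huc
  rw [eq_neg_of_add_eq_zero_left huc, norm_neg] at h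
  exact lt_irrefl _ h

lemma GammaSeq_div_GammaSeq_div_cpow_eq_exp {z a b : ℂ} (hz : z ∈ slitPlane)
    (ha : ∀ j : ℕ, ‖a‖ < ‖z + j‖) (hb : ∀ j : ℕ, ‖b‖ < ‖z + j‖) {n : ℕ} (hn : n ≠ 0) :
    GammaSeq (z + a) n / GammaSeq (z + b) n / z ^ (a - b) =
      exp (∑ j ∈ range (n + 1), gammaRatioFactorLog a b (z + j)
        - (a - b) * (log (z + 1 + n) - log n)) := by
  have hn' : (n : ℂ) ≠ 0 := Nat.cast_ne_zero.2 hn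
  have hz0 : z ≠ 0 := slitPlane_ne_zero hz
  have hsum : ∑ j ∈ range (n + 1), gammaRatioFactorLog a b (z + j)
      = ∑ j ∈ range (n + 1), log ((z + j + b) / (z + j + a))
        + (a - b) * (log (z + 1 + n) - log z) := by
    simp only [gammaRatioFactorLog, sum_add_distrib, ← mul_sum, sum_range_log_add_one_div hz]
    rw [Nat.cast_succ, ← add_assoc, add_right_comm z]
  have hprod : ∏ j ∈ range (n + 1), (z + j + b) / (z + j + a)
      = exp (∑ j ∈ range (n + 1), log ((z + j + b) / (z + j + a))) := by
    rw [exp_sum]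
    refine prod_congr rfl fun j _ => (exp_log ?_).symm
    exact div_ne_zero (add_ne_zero_of_norm_lt (hb j)) (add_ne_zero_of_norm_lt (ha j))
  have hcpow : (n : ℂ) ^ (z + a) = (n : ℂ) ^ (a - b) * (n : ℂ) ^ (z + b) := by
    rw [← cpow_add _ _ hn']; ring_nf
  have hperm (c : ℂ) : ∏ j ∈ range (n + 1), (z + c + j) = ∏ j ∈ range (n + 1), (z + j + c) :=
    prod_congr rfl fun j _ => add_right_comm z c j
  have hne (c : ℂ) (hc : ∀ j : ℕ, ‖c‖ < ‖z + j‖) : ∏ j ∈ range (n + 1), (z + j + c) ≠ 0 :=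
    prod_ne_zero_iff.2 fun j _ => add_ne_zero_of_norm_lt (hc j)
  have hexp : ∑ j ∈ range (n + 1), log ((z + j + b) / (z + j + a))
      + (a - b) * (log (z + 1 + n) - log z) - (a - b) * (log (z + 1 + n) - log n)
      = ∑ j ∈ range (n + 1), log ((z + j + b) / (z + j + a))
        + log n * (a - b) - log z * (a - b) := by ring
  rw [hsum, hexp, exp_sub, exp_add, ← hprod, ← cpow_def_of_ne_zero hn',
    ← cpow_def_of_ne_zero hz0, GammaSeq, GammaSeq, hcpow, hperm, hperm, prod_div_distrib]
  have hA := hne a ha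
  have hB := hne b hb
  have hfac : (n.factorial : ℂ) ≠ 0 := Nat.cast_ne_zero.2 n.factorial_ne_zero
  have hpow : (n : ℂ) ^ (z + b) ≠ 0 := by rw [cpow_def_of_ne_zero hn']; exact exp_ne_zero _
  field_simp

lemma Gamma_div_Gamma_div_cpow_eq_exp_tsum {z a b : ℂ} (hz : z ∈ slitPlane)
    (ha : ∀ j : ℕ, ‖a‖ < ‖z + j‖) (hb : ∀ j : ℕ, ‖b‖ < ‖z + j‖)
    (hs : Summable fun j : ℕ => gammaRatioFactorLog a b (z + j)) :
    Gamma (z + a) / Gamma (z + b) / z ^ (a - b) =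
      exp (∑' j : ℕ, gammaRatioFactorLog a b (z + j)) := by
  have hΓ : Gamma (z + b) ≠ 0 := Gamma_ne_zero fun m hm =>
    add_ne_zero_of_norm_lt (hb m) (by rw [add_right_comm, hm, neg_add_cancel])
  have hseq := ((GammaSeq_tendsto_Gamma (z + a)).div (GammaSeq_tendsto_Gamma (z + b)) hΓ).div_const
    (z ^ (a - b))
  have hexp : Tendsto (fun n : ℕ => ∑ j ∈ range (n + 1), gammaRatioFactorLog a b (z + j)
      - (a - b) * (log (z + 1 + n) - log n)) atTop
      (𝓝 (∑' j : ℕ, gammaRatioFactorLog a b (z + j))) := by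
    simpa using (hs.hasSum.tendsto_sum_nat.comp (tendsto_add_atTop_nat 1)).sub
      ((tendsto_log_add_natCast_sub_log (z + 1)).const_mul (a - b))
  refine tendsto_nhds_unique hseq (((continuous_exp.tendsto _).comp hexp).congr' ?_)
  filter_upwards [eventually_ne_atTop 0] with n hn
  exact (GammaSeq_div_GammaSeq_div_cpow_eq_exp hz ha hb hn).symm

lemma neg_cos_mul_norm_le_re {z : ℂ} {δ : ℝ} (hδ : 0 ≤ δ) (h : |arg z| ≤ Real.pi - δ) :
    -Real.cos δ * ‖z‖ ≤ z.re := by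
  rw [← norm_mul_cos_arg, ← Real.cos_abs (arg z), ← Real.cos_pi_sub, mul_comm]
  exact mul_le_mul_of_nonneg_left
    (Real.cos_le_cos_of_nonneg_of_le_pi (abs_nonneg _) (by linarith) h) (norm_nonneg z)

lemma one_sub_cos_mul_sq_le_sq_norm_add_ofReal {z : ℂ} {δ x : ℝ} (hδ : 0 ≤ δ)
    (h : |arg z| ≤ Real.pi - δ) (hx : 0 ≤ x) :
    (1 - Real.cos δ) / 2 * (‖z‖ + x) ^ 2 ≤ ‖z + x‖ ^ 2 := by
  have hsq : ‖z + x‖ ^ 2 = ‖z‖ ^ 2 + 2 * x * z.re + x ^ 2 := by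
    rw [Complex.sq_norm, Complex.sq_norm, normSq_apply, normSq_apply]
    simp only [add_re, ofReal_re, add_im, ofReal_im, add_zero]
    ring
  rw [hsq]
  nlinarith [mul_le_mul_of_nonneg_left (neg_cos_mul_norm_le_re hδ h) hx,
    mul_nonneg (by linarith [Real.neg_one_le_cos δ] : 0 ≤ 1 + Real.cos δ) (sq_nonneg (‖z‖ - x))]

lemma sum_range_inv_add_sq_le {t : ℝ} (ht : 1 < t) (n : ℕ) :
    ∑ j ∈ range n, ((t + j) ^ 2)⁻¹ ≤ (t - 1)⁻¹ := by
  have hterm (j : ℕ) : ((t + j) ^ 2)⁻¹ ≤ (t + j - 1)⁻¹ - (t + (j + 1 : ℕ) - 1)⁻¹ := by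
    have hj : (1 : ℝ) < t + j := by linarith [(j.cast_nonneg : (0 : ℝ) ≤ j)]
    have : (t + j - 1)⁻¹ - (t + (j + 1 : ℕ) - 1)⁻¹ = ((t + j - 1) * (t + j))⁻¹ := by
      rw [Nat.cast_succ, ← add_assoc, add_sub_cancel_right,
        inv_sub_inv (by linarith) (by linarith), sub_sub_cancel, one_div]
    rw [this]
    exact inv_anti₀ (by nlinarith) (by nlinarith)
  calc ∑ j ∈ range n, ((t + j) ^ 2)⁻¹
      ≤ ∑ j ∈ range n, ((t + j - 1)⁻¹ - (t + (j + 1 : ℕ) - 1)⁻¹) := sum_le_sum fun j _ => hterm j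
    _ = (t - 1)⁻¹ - (t + n - 1)⁻¹ := by rw [sum_range_sub' (fun j : ℕ => (t + j - 1)⁻¹)]; simp
    _ ≤ (t - 1)⁻¹ := sub_le_self _ (inv_nonneg.2 (by linarith [(n.cast_nonneg : (0 : ℝ) ≤ n)]))

lemma summable_gammaRatioFactorLog_and_norm_tsum_le {z a b : ℂ} {M μ : ℝ} (hM : 1 ≤ M)
    (ha : ‖a‖ ≤ M) (hb : ‖b‖ ≤ M) (hμ : 0 < μ) (hz : 1 < ‖z‖)
    (hzM : ∀ j : ℕ, 8 * M ≤ ‖z + j‖) (hlow : ∀ j : ℕ, μ * (‖z‖ + j) ^ 2 ≤ ‖z + j‖ ^ 2) :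
    Summable (fun j : ℕ => gammaRatioFactorLog a b (z + j)) ∧
      ‖∑' j : ℕ, gammaRatioFactorLog a b (z + j)‖ ≤ 32 * M ^ 2 / μ * (‖z‖ - 1)⁻¹ := by
  have hterm (j : ℕ) :
      ‖gammaRatioFactorLog a b (z + j)‖ ≤ 32 * M ^ 2 / μ * ((‖z‖ + j) ^ 2)⁻¹ :=
    calc ‖gammaRatioFactorLog a b (z + j)‖ ≤ 32 * M ^ 2 / ‖z + j‖ ^ 2 :=
          norm_gammaRatioFactorLog_le hM ha hb (hzM j)
      _ ≤ 32 * M ^ 2 / (μ * (‖z‖ + j) ^ 2) :=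
          div_le_div_of_nonneg_left (by positivity) (by positivity) (hlow j)
      _ = 32 * M ^ 2 / μ * ((‖z‖ + j) ^ 2)⁻¹ := by rw [div_mul_eq_div_div, div_eq_mul_inv _ (_ ^ 2)]
  have hpartial (n : ℕ) :
      ∑ j ∈ range n, ‖gammaRatioFactorLog a b (z + j)‖ ≤ 32 * M ^ 2 / μ * (‖z‖ - 1)⁻¹ :=
    (sum_le_sum fun j _ => hterm j).trans <| by
      rw [← mul_sum]; exact mul_le_mul_of_nonneg_left (sum_range_inv_add_sq_le hz n) (by positivity)
  have hs := summable_of_sum_range_le (fun _ => norm_nonneg _) hpartial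
  exact ⟨hs.of_norm, (norm_tsum_le_tsum_norm hs).trans
    (Real.tsum_le_of_sum_range_le (fun _ => norm_nonneg _) hpartial)⟩

lemma Gamma_div_Gamma_div_cpow_eq_exp_tsum_and_norm_le {z a b : ℂ} {δ M : ℝ} (hM : 1 ≤ M)
    (ha : ‖a‖ ≤ M) (hb : ‖b‖ ≤ M) (hδ : 0 ≤ δ) (harg : |arg z| < Real.pi - δ) (hz : 2 ≤ ‖z‖)
    (hzμ : 64 * M ^ 2 ≤ (1 - Real.cos δ) / 2 * ‖z‖ ^ 2) :
    Gamma (z + a) / Gamma (z + b) / z ^ (a - b) = exp (∑' j : ℕ, gammaRatioFactorLog a b (z + j)) ∧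
      ‖∑' j : ℕ, gammaRatioFactorLog a b (z + j)‖
        ≤ 32 * M ^ 2 / ((1 - Real.cos δ) / 2) * (‖z‖ - 1)⁻¹ := by
  set μ := (1 - Real.cos δ) / 2
  have hμ : 0 < μ := pos_of_mul_pos_left ((by positivity : (0 : ℝ) < 64 * M ^ 2).trans_le hzμ)
    (by positivity)
  have hslit : z ∈ slitPlane := mem_slitPlane_iff_arg.2
    ⟨((le_abs_self _).trans_lt (by linarith)).ne, norm_pos_iff.1 (by linarith)⟩
  have hlow (j : ℕ) : μ * (‖z‖ + j) ^ 2 ≤ ‖z + j‖ ^ 2 := by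
    exact_mod_cast one_sub_cos_mul_sq_le_sq_norm_add_ofReal hδ harg.le j.cast_nonneg
  have hzM (j : ℕ) : 8 * M ≤ ‖z + j‖ := by
    refine (pow_le_pow_iff_left₀ (by positivity) (norm_nonneg _) two_ne_zero).1 ?_
    calc (8 * M) ^ 2 = 64 * M ^ 2 := by ring
      _ ≤ μ * ‖z‖ ^ 2 := hzμ
      _ ≤ μ * (‖z‖ + j) ^ 2 := by gcongr; exact le_add_of_nonneg_right j.cast_nonneg
      _ ≤ ‖z + j‖ ^ 2 := hlow j
  obtain ⟨hs, hG⟩ :=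
    summable_gammaRatioFactorLog_and_norm_tsum_le hM ha hb hμ (by linarith) hzM hlow
  have hlt {c : ℂ} (hc : ‖c‖ ≤ M) (j : ℕ) : ‖c‖ < ‖z + j‖ := by linarith [hzM j]
  exact ⟨Gamma_div_Gamma_div_cpow_eq_exp_tsum hslit (hlt ha) (hlt hb) hs, hG⟩

theorem tendsto_Gamma_add_div_Gamma_add_div_cpow {δ M : ℝ} (hδ : 0 < δ) {a b : ℂ → ℂ}
    (ha : ∀ z, ‖a z‖ ≤ M) (hb : ∀ z, ‖b z‖ ≤ M) :
    Tendsto (fun z => Gamma (z + a z) / Gamma (z + b z) / z ^ (a z - b z))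
      (cobounded ℂ ⊓ 𝓟 {z | |arg z| < Real.pi - δ}) (𝓝 1) := by
  wlog hM : 1 ≤ M generalizing M
  · exact this (fun z => (ha z).trans (le_max_left M 1))
      (fun z => (hb z).trans (le_max_left M 1)) (le_max_right M 1)
  -- shrinking `δ` to at most `π` keeps `1 - cos δ` positive
  set d := min δ Real.pi
  have hd : 0 < d := lt_min hδ Real.pi_pos
  have hμ : 0 < (1 - Real.cos d) / 2 := by
    have := Real.cos_lt_cos_of_nonneg_of_le_pi le_rfl (min_le_right δ Real.pi) hd
    rw [Real.cos_zero] at this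
    linarith
  set F := cobounded ℂ ⊓ 𝓟 {z | |arg z| < Real.pi - δ}
  set G : ℂ → ℂ := fun z => ∑' j : ℕ, gammaRatioFactorLog (a z) (b z) (z + j)
  set C := 32 * M ^ 2 / ((1 - Real.cos d) / 2)
  have hev : ∀ᶠ z in F, Gamma (z + a z) / Gamma (z + b z) / z ^ (a z - b z) = exp (G z) ∧
      ‖G z‖ ≤ C * (‖z‖ - 1)⁻¹ := by
    have hμz : ∀ᶠ z in cobounded ℂ, 64 * M ^ 2 ≤ (1 - Real.cos d) / 2 * ‖z‖ ^ 2 :=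
      (((tendsto_pow_atTop two_ne_zero).comp tendsto_norm_cobounded_atTop).const_mul_atTop
        hμ).eventually_ge_atTop _
    filter_upwards [inf_le_left (α := Filter ℂ) (eventually_cobounded_le_norm 2),
      inf_le_left (α := Filter ℂ) hμz, inf_le_right (α := Filter ℂ) (mem_principal_self _)]
      with z hz2 hzμ harg
    exact Gamma_div_Gamma_div_cpow_eq_exp_tsum_and_norm_le hM (ha z) (hb z) hd.le
      (harg.trans_le (by linarith [min_le_left δ Real.pi])) hz2 hzμ
  have hbound : Tendsto (fun z : ℂ => C * (‖z‖ - 1)⁻¹) F (𝓝 0) := by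
    simpa [sub_eq_add_neg] using ((tendsto_inv_atTop_zero.comp (tendsto_atTop_add_const_right _
      (-1) tendsto_norm_cobounded_atTop)).const_mul C).mono_left inf_le_left
  have hG : Tendsto G F (𝓝 0) := squeeze_zero_norm' (hev.mono fun _ h => h.2) hbound
  simpa using ((continuous_exp.tendsto 0).comp hG).congr' (hev.mono fun _ h => h.1.symm)

/-- Equation (A.1): a strengthening of the Stirling-type asymptotics
`Γ(z + a(z))/Γ(z + b(z)) ∼ z^{a(z) - b(z)}` as `|z| → ∞` in the sector
`|arg z| < π - δ`, for bounded functions `a` and `b`. -/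
theorem gamma_ratio_asymptotic (δ : ℝ) (hδ : 0 < δ) (a b : ℂ → ℂ)
    (ha : ∃ C : ℝ, ∀ z : ℂ, ‖a z‖ ≤ C)
    (hb : ∃ C : ℝ, ∀ z : ℂ, ‖b z‖ ≤ C) :
    ∀ ε : ℝ, 0 < ε → ∃ R : ℝ, ∀ z : ℂ,
      R ≤ ‖z‖ → |z.arg| < Real.pi - δ →
      ‖Complex.Gamma (z + a z) / Complex.Gamma (z + b z)
        / z ^ (a z - b z) - 1‖ < ε := by
  obtain ⟨Ca, hCa⟩ := ha
  obtain ⟨Cb, hCb⟩ := hb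
  have hlim := tendsto_Gamma_add_div_Gamma_add_div_cpow hδ
    (fun z => (hCa z).trans (le_max_left Ca Cb)) (fun z => (hCb z).trans (le_max_right Ca Cb))
  intro ε hε
  obtain ⟨R, -, hR⟩ := ((hasBasis_cobounded_norm.inf_principal _).tendsto_iff
    Metric.nhds_basis_ball).1 hlim ε hε
  exact ⟨R, fun z hzR harg => by simpa [dist_eq_norm] using hR z ⟨hzR, harg⟩⟩
end
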